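/- arXiv:2506.15335 — 6 statements merged into one kernel-verified Lean document; each statement's English description precedes it below -/
import Mathlib

section
/- Let n ≥ 3. The ℝ-linear subspace of ℝ[x,y] spanned by Δ = q_n together with all of its iterated partial derivatives (of all orders, including order zero) equals the ℝ-span of the 2n polynomials 1, Δ, and p_k, q_k for 1 ≤ k ≤ n−1; moreover these 2n polynomials are linearly independent over ℝ, so this space (the space of harmonics of I₂(n)) has dimension 2n. -/
/-!
Since `p_k + i q_k = (x + i y)^k`, differentiating termwise in the binomial expansion gives
`∂ₓ p_{k+1} = (k+1) p_k`, `∂ᵧ p_{k+1} = -(k+1) q_k`, `∂ₓ q_{k+1} = (k+1) q_k` and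
`∂ᵧ q_{k+1} = (k+1) p_k`. Hence the span of `p_0 = 1, …, p_{n-1}` and `q_0 = 0, …, q_n`
is closed under differentiation and contains `Δ = q_n`, so it contains all derivatives of `Δ`;
conversely each of these `p_k` and `q_k` is a nonzero multiple of an iterated derivative of `q_n`.
All `p_k` and all `q_k` with `k ≥ 1` are linearly independent: `p_k` is the only one with a
nonzero coefficient at `x^k`, and `q_k` the only one with a nonzero coefficient at `x^{k-1} y`.
-/


open MvPolynomial

/-- The real part of `(x+iy)^k`: `p_k = Σ_j (−1)^j C(k,2j) x^{k−2j} y^{2j}`. -/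
noncomputable def pD (k : ℕ) : MvPolynomial (Fin 2) ℝ :=
  ∑ j ∈ Finset.range (k / 2 + 1),
    C ((-1 : ℝ) ^ j * (k.choose (2 * j) : ℝ)) * X 0 ^ (k - 2 * j) * X 1 ^ (2 * j)

/-- The imaginary part of `(x+iy)^k`: `q_k = Σ_j (−1)^j C(k,2j+1) x^{k−2j−1} y^{2j+1}`. -/
noncomputable def qD (k : ℕ) : MvPolynomial (Fin 2) ℝ :=
  ∑ j ∈ Finset.range ((k + 1) / 2),
    C ((-1 : ℝ) ^ j * (k.choose (2 * j + 1) : ℝ)) * X 0 ^ (k - (2 * j + 1)) * X 1 ^ (2 * j + 1)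

/-- Action of the reflection `s` of the dihedral group on `ℝ[x,y]`. -/
noncomputable def sAct : MvPolynomial (Fin 2) ℝ →ₐ[ℝ] MvPolynomial (Fin 2) ℝ :=
  aeval ![X 0, -X 1]

/-- Action of the rotation `r` (through angle `2π/n`) of the dihedral group on `ℝ[x,y]`. -/
noncomputable def rAct (n : ℕ) : MvPolynomial (Fin 2) ℝ →ₐ[ℝ] MvPolynomial (Fin 2) ℝ :=
  aeval ![C (Real.cos (2 * Real.pi / n)) * X 0 - C (Real.sin (2 * Real.pi / n)) * X 1,
          C (Real.sin (2 * Real.pi / n)) * X 0 + C (Real.cos (2 * Real.pi / n)) * X 1]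

open Finset

section IteratedImages

variable {R M ι : Type*} [Semiring R] [AddCommMonoid M] [Module R M]
variable (D : ι → M →ₗ[R] M) (f : M)

theorem span_foldl_le {T : Submodule R M} (hf : f ∈ T) (hT : ∀ i, ∀ g ∈ T, D i g ∈ T) :
    Submodule.span R {g | ∃ l : List ι, g = l.foldl (fun h i => D i h) f} ≤ T := by
  rw [Submodule.span_le]
  rintro _ ⟨l, rfl⟩
  induction l generalizing f with
  | nil => exact hf
  | cons i l ih => exact ih _ (hT i f hf)

theorem map_mem_span_foldl (i : ι) {g : M}
    (hg : g ∈ Submodule.span R {g | ∃ l : List ι, g = l.foldl (fun h i => D i h) f}) :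
    D i g ∈ Submodule.span R {g | ∃ l : List ι, g = l.foldl (fun h i => D i h) f} := by
  refine (Submodule.span_le (p := (Submodule.span R _).comap (D i))).mpr ?_ hg
  rintro _ ⟨l, rfl⟩
  exact Submodule.subset_span ⟨l ++ [i], by simp⟩

end IteratedImages

theorem linearIndependent_of_dual_diag {R M ι : Type*} [Ring R] [NoZeroDivisors R]
    [AddCommGroup M] [Module R M] {v : ι → M} (φ : ι → M →ₗ[R] R) (hdiag : ∀ i, φ i (v i) ≠ 0)
    (hoff : ∀ i j, i ≠ j → φ i (v j) = 0) : LinearIndependent R v := by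
  rw [linearIndependent_iff']
  intro s g hg i hi
  have h : ∑ j ∈ s, g j • φ i (v j) = 0 := by simpa using congrArg (φ i) hg
  rw [sum_eq_single i (fun j _ hj => by rw [hoff i j hj.symm, smul_zero]) (absurd hi),
    smul_eq_mul] at h
  exact (mul_eq_zero.mp h).resolve_right (hdiag i)

section BinomTerm

variable {R : Type*} [CommSemiring R]

noncomputable def binomTerm (k b : ℕ) : MvPolynomial (Fin 2) R :=
  C (k.choose b : R) * X 0 ^ (k - b) * X 1 ^ b

theorem pderiv_zero_binomTerm_succ (k b : ℕ) :
    pderiv 0 (binomTerm (k + 1) b : MvPolynomial (Fin 2) R) = (k + 1 : R) • binomTerm k b := by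
  calc pderiv 0 (binomTerm (k + 1) b : MvPolynomial (Fin 2) R)
      = (((k + 1).choose b * (k + 1 - b) : ℕ) : MvPolynomial (Fin 2) R) *
          (X 0 ^ (k - b) * X 1 ^ b) := by
        simp only [binomTerm, Derivation.leibniz, Derivation.leibniz_pow, pderiv_X_self,
          pderiv_X_of_ne zero_ne_one.symm, map_natCast, Derivation.map_natCast,
          show k + 1 - b - 1 = k - b by omega, smul_eq_mul]
        push_cast; ring
    _ = (k + 1 : R) • binomTerm k b := by
        rw [← Nat.choose_mul_succ_eq]
        simp only [binomTerm, smul_eq_C_mul, map_add, map_one, map_natCast]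
        push_cast; ring

theorem pderiv_one_binomTerm_succ_succ (k b : ℕ) :
    pderiv 1 (binomTerm (k + 1) (b + 1) : MvPolynomial (Fin 2) R) =
      (k + 1 : R) • binomTerm k b := by
  calc pderiv 1 (binomTerm (k + 1) (b + 1) : MvPolynomial (Fin 2) R)
      = (((k + 1).choose (b + 1) * (b + 1) : ℕ) : MvPolynomial (Fin 2) R) *
          (X 0 ^ (k - b) * X 1 ^ b) := by
        simp only [binomTerm, Derivation.leibniz, Derivation.leibniz_pow, pderiv_X_self,
          pderiv_X_of_ne zero_ne_one, map_natCast, Derivation.map_natCast, Nat.add_sub_add_right,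
          Nat.add_sub_cancel, smul_eq_mul]
        push_cast; ring
    _ = (k + 1 : R) • binomTerm k b := by
        rw [← Nat.add_one_mul_choose_eq]
        simp only [binomTerm, smul_eq_C_mul, map_add, map_one, map_natCast]
        push_cast; ring

theorem pderiv_one_binomTerm_zero (k : ℕ) :
    pderiv 1 (binomTerm k 0 : MvPolynomial (Fin 2) R) = 0 := by
  simp [binomTerm]

theorem coeff_binomTerm (m : Fin 2 →₀ ℕ) (k b : ℕ) :
    coeff m (binomTerm k b : MvPolynomial (Fin 2) R) =
      if m 0 + b = k ∧ m 1 = b then (k.choose b : R) else 0 := by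
  have hmon : (binomTerm k b : MvPolynomial (Fin 2) R) =
      monomial (Finsupp.single 0 (k - b) + Finsupp.single 1 b) (k.choose b : R) := by
    rw [binomTerm, X_pow_eq_monomial, X_pow_eq_monomial, C_mul_monomial, monomial_mul,
      mul_one, mul_one]
  rw [hmon, coeff_monomial]
  by_cases hb : b ≤ k
  · congr 1
    rw [Finsupp.ext_iff, Fin.forall_fin_two]
    simp only [Finsupp.add_apply, Finsupp.single_eq_same, Finsupp.single_eq_of_ne zero_ne_one,
      Finsupp.single_eq_of_ne one_ne_zero, add_zero, zero_add, eq_iff_iff]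
    omega
  · simp [Nat.choose_eq_zero_of_lt (not_le.mp hb)]

theorem binomTerm_of_lt {k b : ℕ} (h : k < b) : (binomTerm k b : MvPolynomial (Fin 2) R) = 0 := by
  simp [binomTerm, Nat.choose_eq_zero_of_lt h]

end BinomTerm

-- Beyond the defining range the terms vanish, so `p_k` and `p_{k+1}` can be compared termwise.
theorem pD_eq_sum {k N : ℕ} (hN : k / 2 < N) :
    pD k = ∑ j ∈ range N, (-1 : ℝ) ^ j • binomTerm k (2 * j) := by
  rw [pD]
  refine sum_subset_zero_on_sdiff (range_subset_range.mpr hN) (fun j hj => ?_) fun j _ => ?_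
  · simp only [mem_sdiff, mem_range] at hj
    rw [binomTerm_of_lt (by omega), smul_zero]
  · rw [binomTerm, smul_eq_C_mul, map_mul]
    ring

theorem qD_eq_sum {k N : ℕ} (hN : (k + 1) / 2 ≤ N) :
    qD k = ∑ j ∈ range N, (-1 : ℝ) ^ j • binomTerm k (2 * j + 1) := by
  rw [qD]
  refine sum_subset_zero_on_sdiff (range_subset_range.mpr hN) (fun j hj => ?_) fun j _ => ?_
  · simp only [mem_sdiff, mem_range] at hj
    rw [binomTerm_of_lt (by omega), smul_zero]
  · rw [binomTerm, smul_eq_C_mul, map_mul]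
    ring

theorem pD_zero : pD 0 = 1 := by simp [pD]

theorem qD_zero : qD 0 = 0 := by simp [qD]

theorem pderiv_zero_pD_succ (k : ℕ) : pderiv 0 (pD (k + 1)) = (k + 1 : ℝ) • pD k := by
  rw [pD_eq_sum (N := k + 1) (by omega), pD_eq_sum (N := k + 1) (by omega), map_sum, smul_sum]
  refine sum_congr rfl fun j _ => ?_
  rw [Derivation.map_smul, pderiv_zero_binomTerm_succ, smul_comm]

theorem pderiv_zero_qD_succ (k : ℕ) : pderiv 0 (qD (k + 1)) = (k + 1 : ℝ) • qD k := by
  rw [qD_eq_sum (N := k + 1) (by omega), qD_eq_sum (N := k + 1) (by omega), map_sum, smul_sum]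
  refine sum_congr rfl fun j _ => ?_
  rw [Derivation.map_smul, pderiv_zero_binomTerm_succ, smul_comm]

theorem pderiv_one_qD_succ (k : ℕ) : pderiv 1 (qD (k + 1)) = (k + 1 : ℝ) • pD k := by
  rw [qD_eq_sum (N := k + 1) (by omega), pD_eq_sum (N := k + 1) (by omega), map_sum, smul_sum]
  refine sum_congr rfl fun j _ => ?_
  rw [Derivation.map_smul, pderiv_one_binomTerm_succ_succ, smul_comm]

theorem pderiv_one_pD_succ (k : ℕ) : pderiv 1 (pD (k + 1)) = -(k + 1 : ℝ) • qD k := by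
  rw [pD_eq_sum (N := k + 2) (by omega), qD_eq_sum (N := k + 1) (by omega), sum_range_succ',
    map_add, map_sum, smul_sum, Derivation.map_smul, mul_zero, pderiv_one_binomTerm_zero, smul_zero,
    add_zero]
  refine sum_congr rfl fun j _ => ?_
  rw [Derivation.map_smul, mul_add, mul_one, pderiv_one_binomTerm_succ_succ, pow_succ]
  module

theorem coeff_pD (m : Fin 2 →₀ ℕ) (k : ℕ) :
    coeff m (pD k) =
      if m 0 + m 1 = k ∧ Even (m 1) then (-1) ^ (m 1 / 2) * (k.choose (m 1) : ℝ) else 0 := by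
  rw [pD_eq_sum (N := k + 1) (by omega), coeff_sum]
  simp only [coeff_smul, coeff_binomTerm, smul_eq_mul, mul_ite, mul_zero]
  split_ifs with h
  · obtain ⟨hk, j, hj⟩ := h
    rw [sum_eq_single j (fun i _ hi => if_neg (by omega)) (fun hj' => by simp at hj'; omega),
      if_pos (by omega), hj, ← two_mul, Nat.mul_div_cancel_left j two_pos]
  · exact sum_eq_zero fun j _ => if_neg fun hj => h ⟨by omega, j, by omega⟩

theorem coeff_qD (m : Fin 2 →₀ ℕ) (k : ℕ) :
    coeff m (qD k) =
      if m 0 + m 1 = k ∧ Odd (m 1) then (-1) ^ (m 1 / 2) * (k.choose (m 1) : ℝ) else 0 := by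
  rw [qD_eq_sum (N := k + 1) (by omega), coeff_sum]
  simp only [coeff_smul, coeff_binomTerm, smul_eq_mul, mul_ite, mul_zero]
  split_ifs with h
  · obtain ⟨hk, j, hj⟩ := h
    rw [sum_eq_single j (fun i _ hi => if_neg (by omega)) (fun hj' => by simp at hj'; omega),
      if_pos (by omega), hj]
    congr 2
    omega
  · exact sum_eq_zero fun j _ => if_neg fun hj => h ⟨by omega, j, by omega⟩

theorem linearIndependent_pD_qD :
    LinearIndependent ℝ (Sum.elim pD fun k => qD (k + 1)) := by
  let φ : ℕ ⊕ ℕ → MvPolynomial (Fin 2) ℝ →ₗ[ℝ] ℝ :=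
    Sum.elim (fun a => lcoeff ℝ (Finsupp.single 0 a))
      (fun a => lcoeff ℝ (Finsupp.single 0 a + Finsupp.single 1 1))
  refine linearIndependent_of_dual_diag φ ?_ ?_
  · rintro (a | a) <;> simp [φ, coeff_pD, coeff_qD, Nat.cast_add_one_ne_zero]
  · rintro (a | a) (b | b) hab <;> simp [φ, coeff_pD, coeff_qD] at hab ⊢ <;> omega

theorem pderiv_pD_succ_mem_span (i : Fin 2) (k : ℕ) :
    pderiv i (pD (k + 1)) ∈ Submodule.span ℝ {pD k, qD k} := by
  fin_cases i
  · exact (pderiv_zero_pD_succ k).symm ▸ Submodule.smul_mem _ _ (Submodule.subset_span (by simp))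
  · exact (pderiv_one_pD_succ k).symm ▸ Submodule.smul_mem _ _ (Submodule.subset_span (by simp))

theorem pderiv_qD_succ_mem_span (i : Fin 2) (k : ℕ) :
    pderiv i (qD (k + 1)) ∈ Submodule.span ℝ {pD k, qD k} := by
  fin_cases i
  · exact (pderiv_zero_qD_succ k).symm ▸ Submodule.smul_mem _ _ (Submodule.subset_span (by simp))
  · exact (pderiv_one_qD_succ k).symm ▸ Submodule.smul_mem _ _ (Submodule.subset_span (by simp))

theorem qD_mem_of_le {H : Submodule ℝ (MvPolynomial (Fin 2) ℝ)}
    (hH : ∀ i, ∀ g ∈ H, pderiv i g ∈ H) {n k : ℕ} (hq : qD n ∈ H) (hk : k ≤ n) : qD k ∈ H := by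
  induction hk using Nat.decreasingInduction with
  | self => exact hq
  | of_succ k _ ih =>
    exact (H.smul_mem_iff (Nat.cast_add_one_ne_zero k)).mp (pderiv_zero_qD_succ k ▸ hH 0 _ ih)

theorem pD_mem_of_lt {H : Submodule ℝ (MvPolynomial (Fin 2) ℝ)}
    (hH : ∀ i, ∀ g ∈ H, pderiv i g ∈ H) {n k : ℕ} (hq : qD n ∈ H) (hk : k < n) : pD k ∈ H := by
  obtain ⟨m, rfl⟩ : ∃ m, n = m + 1 := ⟨n - 1, by omega⟩
  replace hk : k ≤ m := Nat.lt_succ_iff.mp hk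
  induction hk using Nat.decreasingInduction with
  | self =>
    exact (H.smul_mem_iff (Nat.cast_add_one_ne_zero m)).mp (pderiv_one_qD_succ m ▸ hH 1 _ hq)
  | of_succ k _ ih =>
    exact (H.smul_mem_iff (Nat.cast_add_one_ne_zero k)).mp (pderiv_zero_pD_succ k ▸ hH 0 _ ih)

noncomputable def harmonicBasis (n : ℕ) :
    Fin 2 ⊕ Fin (n - 1) ⊕ Fin (n - 1) → MvPolynomial (Fin 2) ℝ :=
  Sum.elim ![1, qD n] (Sum.elim (fun k => pD (k.1 + 1)) (fun k => qD (k.1 + 1)))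

theorem harmonicBasis_eq_comp {n : ℕ} (hn : 1 ≤ n) :
    harmonicBasis n = Sum.elim pD (fun k => qD (k + 1)) ∘
      Sum.elim ![Sum.inl 0, Sum.inr (n - 1)]
        (Sum.elim (fun k => Sum.inl (k.1 + 1)) fun k => Sum.inr k.1) := by
  funext i
  rcases i with i | k | k
  · fin_cases i
    · exact pD_zero.symm
    · exact congrArg qD (by omega)
  all_goals rfl

theorem linearIndependent_harmonicBasis {n : ℕ} (hn : 1 ≤ n) :
    LinearIndependent ℝ (harmonicBasis n) := by
  rw [harmonicBasis_eq_comp hn]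
  refine linearIndependent_pD_qD.comp _ ?_
  rintro (i | k | k) (j | l | l) h
  all_goals try fin_cases i
  all_goals try fin_cases j
  all_goals simp [Fin.ext_iff] at h ⊢ <;> omega

theorem pD_mem_span_harmonicBasis {n k : ℕ} (hk : k < n) :
    pD k ∈ Submodule.span ℝ (Set.range (harmonicBasis n)) := by
  refine Submodule.subset_span ?_
  cases k with
  | zero => exact ⟨Sum.inl 0, pD_zero.symm⟩
  | succ k => exact ⟨Sum.inr (Sum.inl ⟨k, by omega⟩), rfl⟩

theorem qD_mem_span_harmonicBasis {n k : ℕ} (hk : k ≤ n) :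
    qD k ∈ Submodule.span ℝ (Set.range (harmonicBasis n)) := by
  cases k with
  | zero => exact qD_zero ▸ Submodule.zero_mem _
  | succ k =>
    refine Submodule.subset_span ?_
    rcases hk.eq_or_lt with rfl | hk
    · exact ⟨Sum.inl 1, rfl⟩
    · exact ⟨Sum.inr (Sum.inr ⟨k, by omega⟩), rfl⟩

theorem span_pD_qD_le_span_harmonicBasis {n k : ℕ} (hk : k < n) :
    Submodule.span ℝ {pD k, qD k} ≤ Submodule.span ℝ (Set.range (harmonicBasis n)) :=
  Submodule.span_le.mpr <| Set.insert_subset (pD_mem_span_harmonicBasis hk)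
    (Set.singleton_subset_iff.mpr (qD_mem_span_harmonicBasis hk.le))

theorem pderiv_mem_span_harmonicBasis {n : ℕ} (hn : 1 ≤ n) (i : Fin 2)
    {f : MvPolynomial (Fin 2) ℝ} (hf : f ∈ Submodule.span ℝ (Set.range (harmonicBasis n))) :
    pderiv i f ∈ Submodule.span ℝ (Set.range (harmonicBasis n)) := by
  refine (Submodule.span_le (p := (Submodule.span ℝ _).comap (pderiv i).toLinearMap)).mpr ?_ hf
  rintro _ ⟨j | k | k, rfl⟩
  · fin_cases j
    · simp [harmonicBasis]
    · obtain ⟨m, rfl⟩ : ∃ m, n = m + 1 := ⟨n - 1, by omega⟩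
      exact span_pD_qD_le_span_harmonicBasis (Nat.lt_succ_self m) (pderiv_qD_succ_mem_span i m)
  · exact span_pD_qD_le_span_harmonicBasis (by omega) (pderiv_pD_succ_mem_span i k)
  · exact span_pD_qD_le_span_harmonicBasis (by omega) (pderiv_qD_succ_mem_span i k)

theorem span_foldl_pderiv_qD {n : ℕ} (hn : 1 ≤ n) :
    Submodule.span ℝ {g | ∃ l : List (Fin 2), g = l.foldl (fun h i => pderiv i h) (qD n)} =
      Submodule.span ℝ (Set.range (harmonicBasis n)) := by
  let D : Fin 2 → MvPolynomial (Fin 2) ℝ →ₗ[ℝ] MvPolynomial (Fin 2) ℝ :=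
    fun i => (pderiv i).toLinearMap
  have hq : qD n ∈
      Submodule.span ℝ {g | ∃ l : List (Fin 2), g = l.foldl (fun h i => D i h) (qD n)} :=
    Submodule.subset_span ⟨[], rfl⟩
  refine le_antisymm (span_foldl_le D _ (qD_mem_span_harmonicBasis le_rfl)
    fun i _ => pderiv_mem_span_harmonicBasis hn i) (Submodule.span_le.mpr ?_)
  rintro _ ⟨j | k | k, rfl⟩
  · fin_cases j
    · show 1 ∈ _
      exact pD_zero ▸ pD_mem_of_lt (map_mem_span_foldl D _) hq (by omega)
    · exact hq
  · exact pD_mem_of_lt (map_mem_span_foldl D _) hq (by omega)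
  · exact qD_mem_of_le (map_mem_span_foldl D _) hq (by omega)

/-- The space of harmonics of `I₂(n)` (the span of `Δ = q_n` and all of its iterated partial
derivatives) is spanned by the `2n` linearly independent polynomials
`1, Δ, p_1, q_1, …, p_{n−1}, q_{n−1}`, and hence has dimension `2n`. -/
theorem stmt1 (n : ℕ) (hn : 3 ≤ n)
    (H : Submodule ℝ (MvPolynomial (Fin 2) ℝ))
    (hH : H = Submodule.span ℝ
      {g | ∃ l : List (Fin 2), g = l.foldl (fun h i => MvPolynomial.pderiv i h) (qD n)})
    (F : Fin 2 ⊕ Fin (n - 1) ⊕ Fin (n - 1) → MvPolynomial (Fin 2) ℝ)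
    (hF : F = Sum.elim ![1, qD n]
      (Sum.elim (fun k : Fin (n - 1) => pD (k.1 + 1)) (fun k : Fin (n - 1) => qD (k.1 + 1)))) :
    H = Submodule.span ℝ (Set.range F) ∧ LinearIndependent ℝ F ∧
    Module.finrank ℝ H = 2 * n := by
  subst hH hF
  have hspan := span_foldl_pderiv_qD (n := n) (by omega)
  have hli := linearIndependent_harmonicBasis (n := n) (by omega)
  refine ⟨hspan, hli, ?_⟩
  rw [hspan, finrank_span_eq_card hli]
  simp only [Fintype.card_sum, Fintype.card_fin]
  omega
end

section
/- Let n ≥ 3. For every k ≥ 1 the polynomials p_{k+1} and q_{k+1} lie in the ideal (p_k, q_k) of ℝ[x,y]. Consequently the dihedral Specht ideals form a strictly decreasing chain I₀ ⊋ I₁ ⊋ ⋯ ⊋ I_{⌊(n−1)/2⌋}; if n is odd then I_{(n−1)/2} ⊋ I_n, and if n is even then I_{(n−2)/2} ⊋ I_{n/2}^{Re} and I_{(n−2)/2} ⊋ I_{n/2}^{Im}, the ideals I_{n/2}^{Re} and I_{n/2}^{Im} are incomparable with respect to inclusion, and both strictly contain I_n. -/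
open MvPolynomial

/-!
With `z = x + iy`, the pair `(p_k, q_k)` is `z^k` split into real and imaginary parts, so
`z^{k+1} = z · z^k` and `z^{2m} = (z^m)^2` give `p_{k+1} = x p_k − y q_k`, `q_{k+1} = y p_k + x q_k`
and `q_{2m} = 2 p_m q_m`, hence all the inclusions. Strictness is detected by ring homomorphisms
mapping the smaller ideal into an ideal that misses the image of a chosen element: setting `y = 0`
sends `p_k ↦ x^k` and `q_k ↦ 0`, which separates ideals generated in different degrees, and at
`(cos θ, sin θ)` the values of `p_k, q_k` are `cos kθ, sin kθ`; the points `θ = 0` and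
`θ = π/(2m)` (a zero of `p_m` and `q_{2m}` but not of `q_m`) separate the principal ideals.
-/

theorem Finset.sum_range_eq_sum_even_add_sum_odd {M : Type*} [AddCommMonoid M] (g : ℕ → M)
    (N : ℕ) :
    ∑ j ∈ range N, g j =
      ∑ m ∈ range ((N + 1) / 2), g (2 * m) + ∑ m ∈ range (N / 2), g (2 * m + 1) := by
  induction N with
  | zero => simp
  | succ N ih =>
    rw [sum_range_succ, ih]
    rcases Nat.even_or_odd' N with ⟨a, rfl | rfl⟩
    · rw [show (2 * a + 1 + 1) / 2 = a + 1 by omega, show (2 * a + 1) / 2 = a by omega,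
        show 2 * a / 2 = a by omega]
      simp only [sum_range_succ]
      abel
    · rw [show (2 * a + 1 + 1 + 1) / 2 = a + 1 by omega, show (2 * a + 1 + 1) / 2 = a + 1 by omega,
        show (2 * a + 1) / 2 = a by omega]
      simp only [sum_range_succ]
      abel

namespace MvPolynomial

variable {σ : Type*}

noncomputable abbrev complexify : MvPolynomial σ ℝ →+* MvPolynomial σ ℂ :=
  map Complex.ofRealHom

theorem complexify_add_I_mul_inj {p q r s : MvPolynomial σ ℝ}
    (h : complexify p + C Complex.I * complexify q = complexify r + C Complex.I * complexify s) :
    p = r ∧ q = s := by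
  have hcoeff (m : σ →₀ ℕ) := congrArg (coeff m) h
  simp only [coeff_add, coeff_C_mul, coeff_map] at hcoeff
  constructor <;> ext m
  · simpa using congrArg Complex.re (hcoeff m)
  · simpa using congrArg Complex.im (hcoeff m)

theorem C_I_mul_C_I : (C Complex.I * C Complex.I : MvPolynomial σ ℂ) = -1 := by
  rw [← C_mul, Complex.I_mul_I, C_neg, C_1]

theorem C_I_mul_X_pow_two_mul (i : σ) (j : ℕ) :
    (C Complex.I * X i : MvPolynomial σ ℂ) ^ (2 * j) = C ((-1) ^ j) * X i ^ (2 * j) := by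
  rw [mul_pow, ← C_pow, pow_mul, Complex.I_sq]

theorem notMem_span_singleton_of_eval_eq_zero {R : Type*} [CommSemiring R]
    {a b : MvPolynomial σ R} (v : σ → R) (ha : eval v a = 0) (hb : eval v b ≠ 0) :
    b ∉ Ideal.span {a} := by
  rw [Ideal.mem_span_singleton']
  rintro ⟨c, rfl⟩
  simp [ha] at hb

end MvPolynomial

theorem Ideal.notMem_span_of_map_mem {R S F : Type*} [CommSemiring R] [Semiring S]
    [FunLike F R S] [RingHomClass F R S] (f : F) {J : Ideal S} {s : Set R} {b : R}
    (hs : ∀ a ∈ s, f a ∈ J) (hb : f b ∉ J) : b ∉ Ideal.span s :=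
  fun h => hb (Ideal.span_le (I := J.comap f) |>.2 hs h)

theorem complexify_pD_add_I_mul_qD (k : ℕ) :
    complexify (pD k) + C Complex.I * complexify (qD k) = (X 0 + C Complex.I * X 1) ^ k := by
  rw [add_comm (X 0), add_pow, Finset.sum_range_eq_sum_even_add_sum_odd,
    show (k + 1 + 1) / 2 = k / 2 + 1 by omega, pD, qD, map_sum, map_sum, Finset.mul_sum]
  congr 1 <;> refine Finset.sum_congr rfl fun j _ => ?_
  · rw [C_I_mul_X_pow_two_mul]
    simp only [map_mul, map_pow, map_X, map_C, Complex.ofRealHom_eq_coe]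
    push_cast
    simp only [C_neg, C_1, ← map_natCast C]
    ring
  · rw [pow_succ (C Complex.I * X 1), C_I_mul_X_pow_two_mul]
    simp only [map_mul, map_pow, map_X, map_C, Complex.ofRealHom_eq_coe]
    push_cast
    simp only [C_neg, C_1, ← map_natCast C]
    ring

theorem pD_succ_qD_succ (k : ℕ) :
    pD (k + 1) = X 0 * pD k - X 1 * qD k ∧ qD (k + 1) = X 1 * pD k + X 0 * qD k := by
  apply complexify_add_I_mul_inj
  rw [complexify_pD_add_I_mul_qD, pow_succ, ← complexify_pD_add_I_mul_qD]
  simp only [map_add, map_sub, map_mul, map_X]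
  linear_combination (complexify (qD k) * X 1) * C_I_mul_C_I

theorem qD_two_mul (m : ℕ) : qD (2 * m) = 2 * pD m * qD m := by
  refine (complexify_add_I_mul_inj (p := pD (2 * m)) (r := pD m ^ 2 - qD m ^ 2) ?_).2
  rw [complexify_pD_add_I_mul_qD, pow_mul', ← complexify_pD_add_I_mul_qD]
  simp only [map_sub, map_mul, map_pow, map_ofNat]
  linear_combination complexify (qD m) ^ 2 * C_I_mul_C_I

theorem eval_pD_qD_cos_sin (θ : ℝ) (k : ℕ) :
    eval ![Real.cos θ, Real.sin θ] (pD k) = Real.cos (k * θ) ∧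
      eval ![Real.cos θ, Real.sin θ] (qD k) = Real.sin (k * θ) := by
  induction k with
  | zero => simp [pD, qD]
  | succ k ih =>
    simp only [pD_succ_qD_succ, map_add, map_sub, map_mul, eval_X, ih]
    push_cast
    simp only [add_mul, one_mul, Real.cos_add, Real.sin_add]
    constructor <;> ring

theorem aeval_pD_qD_X_zero (k : ℕ) :
    aeval ![Polynomial.X, 0] (pD k) = (Polynomial.X : Polynomial ℝ) ^ k ∧
      aeval ![(Polynomial.X : Polynomial ℝ), 0] (qD k) = 0 := by
  induction k with
  | zero => simp [pD, qD]
  | succ k ih =>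
    simp [pD_succ_qD_succ, ih, pow_succ']

theorem eval_pD_qD_one_zero (k : ℕ) :
    eval ![1, 0] (pD k) = 1 ∧ eval ![1, 0] (qD k) = 0 := by
  simpa using eval_pD_qD_cos_sin 0 k

theorem eval_pD_qD_of_mul_eq_pi_div_two {m : ℕ} {θ : ℝ} (h : m * θ = Real.pi / 2) :
    eval ![Real.cos θ, Real.sin θ] (pD m) = 0 ∧ eval ![Real.cos θ, Real.sin θ] (qD m) = 1 ∧
      eval ![Real.cos θ, Real.sin θ] (qD (2 * m)) = 0 := by
  refine ⟨?_, ?_, ?_⟩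
  · rw [(eval_pD_qD_cos_sin θ m).1, h, Real.cos_pi_div_two]
  · rw [(eval_pD_qD_cos_sin θ m).2, h, Real.sin_pi_div_two]
  · rw [(eval_pD_qD_cos_sin θ (2 * m)).2, Nat.cast_mul, Nat.cast_two, mul_assoc, h,
      mul_div_cancel₀ _ two_ne_zero, Real.sin_pi]

theorem exists_mul_eq_pi_div_two {m : ℕ} (hm : m ≠ 0) : ∃ θ : ℝ, m * θ = Real.pi / 2 :=
  ⟨Real.pi / (2 * m), by field_simp⟩

theorem span_pD_qD_antitone :
    Antitone fun k => Ideal.span ({pD k, qD k} : Set (MvPolynomial (Fin 2) ℝ)) := by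
  refine antitone_nat_of_succ_le fun k => Ideal.span_le.2 ?_
  have hp : pD k ∈ Ideal.span ({pD k, qD k} : Set (MvPolynomial (Fin 2) ℝ)) :=
    Ideal.subset_span (by simp)
  have hq : qD k ∈ Ideal.span ({pD k, qD k} : Set (MvPolynomial (Fin 2) ℝ)) :=
    Ideal.subset_span (by simp)
  rintro _ (rfl | rfl) <;> simp only [pD_succ_qD_succ, SetLike.mem_coe]
  · exact sub_mem (Ideal.mul_mem_left _ _ hp) (Ideal.mul_mem_left _ _ hq)
  · exact add_mem (Ideal.mul_mem_left _ _ hp) (Ideal.mul_mem_left _ _ hq)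

theorem pD_notMem_span_of_lt {k d : ℕ} (hkd : k < d) {s : Set (MvPolynomial (Fin 2) ℝ)}
    (hs : s ⊆ {pD d, qD d}) : pD k ∉ Ideal.span s := by
  refine Ideal.notMem_span_of_map_mem (aeval ![(Polynomial.X : Polynomial ℝ), 0])
    (J := Ideal.span {Polynomial.X ^ d}) (fun a ha => ?_) ?_
  · rcases hs ha with rfl | rfl <;> simp [aeval_pD_qD_X_zero]
  · rw [(aeval_pD_qD_X_zero k).1, Ideal.mem_span_singleton,
      pow_dvd_pow_iff Polynomial.X_ne_zero Polynomial.not_isUnit_X]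
    omega

theorem span_lt_span_pD_qD_of_lt {k d : ℕ} (hkd : k < d) {s : Set (MvPolynomial (Fin 2) ℝ)}
    (hs : s ⊆ {pD d, qD d}) : Ideal.span s < Ideal.span {pD k, qD k} :=
  SetLike.lt_iff_le_and_exists.2
    ⟨(Ideal.span_mono hs).trans (span_pD_qD_antitone hkd.le), pD k, Ideal.subset_span (by simp),
      pD_notMem_span_of_lt hkd hs⟩

theorem not_span_pD_le_span_qD (m : ℕ) :
    ¬ Ideal.span ({pD m} : Set (MvPolynomial (Fin 2) ℝ)) ≤ Ideal.span {qD m} := fun h =>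
  notMem_span_singleton_of_eval_eq_zero ![1, 0] (eval_pD_qD_one_zero m).2
    (by simp [(eval_pD_qD_one_zero m).1]) (h (Ideal.mem_span_singleton_self _))

theorem not_span_qD_le_span_pD {m : ℕ} (hm : m ≠ 0) :
    ¬ Ideal.span ({qD m} : Set (MvPolynomial (Fin 2) ℝ)) ≤ Ideal.span {pD m} := fun h => by
  obtain ⟨θ, hθ⟩ := exists_mul_eq_pi_div_two hm
  obtain ⟨hp, hq, -⟩ := eval_pD_qD_of_mul_eq_pi_div_two hθ
  exact notMem_span_singleton_of_eval_eq_zero _ hp (by simp [hq])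
    (h (Ideal.mem_span_singleton_self _))

theorem span_qD_two_mul_lt_span_pD (m : ℕ) :
    Ideal.span ({qD (2 * m)} : Set (MvPolynomial (Fin 2) ℝ)) < Ideal.span {pD m} :=
  SetLike.lt_iff_le_and_exists.2
    ⟨Ideal.span_singleton_le_span_singleton.2 ⟨2 * qD m, by rw [qD_two_mul]; ring⟩, pD m,
      Ideal.mem_span_singleton_self _,
      notMem_span_singleton_of_eval_eq_zero ![1, 0] (by simp [qD_two_mul, eval_pD_qD_one_zero])
        (by simp [(eval_pD_qD_one_zero m).1])⟩

theorem span_qD_two_mul_lt_span_qD {m : ℕ} (hm : m ≠ 0) :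
    Ideal.span ({qD (2 * m)} : Set (MvPolynomial (Fin 2) ℝ)) < Ideal.span {qD m} := by
  obtain ⟨θ, hθ⟩ := exists_mul_eq_pi_div_two hm
  obtain ⟨-, hq, hq2⟩ := eval_pD_qD_of_mul_eq_pi_div_two hθ
  exact SetLike.lt_iff_le_and_exists.2
    ⟨Ideal.span_singleton_le_span_singleton.2 ⟨2 * pD m, by rw [qD_two_mul]; ring⟩, qD m,
      Ideal.mem_span_singleton_self _,
      notMem_span_singleton_of_eval_eq_zero _ hq2 (by simp [hq])⟩

/-- Inclusions among the dihedral Specht ideals: `p_{k+1}, q_{k+1} ∈ (p_k, q_k)` for `k ≥ 1`;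
the chain `I₀ ⊋ I₁ ⊋ ⋯ ⊋ I_{⌊(n−1)/2⌋}` is strictly decreasing; for odd `n`,
`I_{(n−1)/2} ⊋ I_n`; for even `n`, `I_{(n−2)/2} ⊋ I_{n/2}^{Re}, I_{n/2}^{Im}`, the latter two
are incomparable and both strictly contain `I_n`. -/
theorem stmt5 (n : ℕ) (hn : 3 ≤ n) :
    (∀ k : ℕ, 1 ≤ k →
      pD (k + 1) ∈ Ideal.span ({pD k, qD k} : Set (MvPolynomial (Fin 2) ℝ)) ∧
      qD (k + 1) ∈ Ideal.span ({pD k, qD k} : Set (MvPolynomial (Fin 2) ℝ))) ∧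
    (∀ k : ℕ, k < (n - 1) / 2 →
      Ideal.span ({pD (k + 1), qD (k + 1)} : Set (MvPolynomial (Fin 2) ℝ))
        < Ideal.span {pD k, qD k}) ∧
    (Odd n →
      Ideal.span ({qD n} : Set (MvPolynomial (Fin 2) ℝ))
        < Ideal.span {pD ((n - 1) / 2), qD ((n - 1) / 2)}) ∧
    (Even n →
      Ideal.span ({pD (n / 2)} : Set (MvPolynomial (Fin 2) ℝ))
        < Ideal.span {pD ((n - 2) / 2), qD ((n - 2) / 2)} ∧
      Ideal.span ({qD (n / 2)} : Set (MvPolynomial (Fin 2) ℝ))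
        < Ideal.span {pD ((n - 2) / 2), qD ((n - 2) / 2)} ∧
      ¬ Ideal.span ({pD (n / 2)} : Set (MvPolynomial (Fin 2) ℝ)) ≤ Ideal.span {qD (n / 2)} ∧
      ¬ Ideal.span ({qD (n / 2)} : Set (MvPolynomial (Fin 2) ℝ)) ≤ Ideal.span {pD (n / 2)} ∧
      Ideal.span ({qD n} : Set (MvPolynomial (Fin 2) ℝ)) < Ideal.span {pD (n / 2)} ∧
      Ideal.span ({qD n} : Set (MvPolynomial (Fin 2) ℝ)) < Ideal.span {qD (n / 2)}) := by
  refine ⟨fun k _ => ⟨?_, ?_⟩, fun k _ => span_lt_span_pD_qD_of_lt k.lt_succ_self subset_rfl,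
    fun _ => span_lt_span_pD_qD_of_lt (d := n) (by omega) (by simp), fun ⟨m, hnm⟩ => ?_⟩
  · exact span_pD_qD_antitone k.le_succ (Ideal.subset_span (by simp))
  · exact span_pD_qD_antitone k.le_succ (Ideal.subset_span (by simp))
  obtain ⟨j, rfl⟩ : ∃ j, m = j + 1 := ⟨m - 1, by omega⟩
  rw [show n / 2 = j + 1 by omega, show (n - 2) / 2 = j by omega,
    show n = 2 * (j + 1) by omega]
  exact ⟨span_lt_span_pD_qD_of_lt j.lt_succ_self (by simp),
    span_lt_span_pD_qD_of_lt j.lt_succ_self (by simp), not_span_pD_le_span_qD _,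
    not_span_qD_le_span_pD j.succ_ne_zero, span_qD_two_mul_lt_span_pD _,
    span_qD_two_mul_lt_span_qD j.succ_ne_zero⟩
end

section
/- Let n ≥ 3. The ideals I₀ = (1), I₁ = (x, y) and I_n = (q_n) of ℝ[x,y] are radical ideals, and if n is even then the ideals I_{n/2}^{Re} = (p_{n/2}) and I_{n/2}^{Im} = (q_{n/2}) are radical ideals as well. -/
open MvPolynomial

/-!
Over `ℂ` put `z = x + i y` and `w = x - i y`. Then `z ^ k = p_k + i q_k` and `w ^ k = p_k - i q_k`,
so `2 i q_k = z ^ k - w ^ k` and `4 i p_k q_k = z ^ (2k) - w ^ (2k)`. For `m ≠ 0`,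
`z ^ m - w ^ m = ∏_{μ ^ m = 1} (z - μ w)` is a product of pairwise non-proportional linear forms,
which are prime, so it is squarefree. Hence `p_k` and `q_k` are squarefree in `ℂ[x,y]`, and then
in `ℝ[x,y]`, because a polynomial whose image over `ℂ` is a unit is itself a unit. A principal
ideal generated by a squarefree element of a UFD is radical, and `(x, y)` is the kernel of
evaluation at the origin, a prime ideal.
-/

open Finset Complex

theorem Finset.sum_range_succ_eq_sum_even_add_sum_odd {M : Type*} [AddCommMonoid M]
    (f : ℕ → M) (k : ℕ) :
    ∑ m ∈ range (k + 1), f m =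
      ∑ j ∈ range (k / 2 + 1), f (2 * j) + ∑ j ∈ range ((k + 1) / 2), f (2 * j + 1) := by
  induction k with
  | zero => simp
  | succ k ih =>
    rw [sum_range_succ, ih]
    obtain ⟨r, rfl | rfl⟩ := Nat.even_or_odd' k
    · rw [show (2 * r + 1) / 2 + 1 = r + 1 by omega, show (2 * r + 1 + 1) / 2 = r + 1 by omega,
        show 2 * r / 2 + 1 = r + 1 by omega, show (2 * r + 1) / 2 = r by omega,
        sum_range_succ (fun j => f (2 * j + 1)) r]
      abel
    · rw [show (2 * r + 1 + 1) / 2 + 1 = r + 2 by omega,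
        show (2 * r + 1 + 1 + 1) / 2 = r + 1 by omega, show (2 * r + 1) / 2 + 1 = r + 1 by omega,
        show (2 * r + 1 + 1) / 2 = r + 1 by omega, sum_range_succ (fun j => f (2 * j)) (r + 1),
        show 2 * (r + 1) = 2 * r + 1 + 1 by ring]
      abel

theorem add_mul_pow_eq_sum_even_add_mul_sum_odd {R : Type*} [CommRing R] {i : R}
    (hi : i ^ 2 = -1) (s t : R) (k : ℕ) :
    (s + i * t) ^ k =
      ∑ j ∈ range (k / 2 + 1), (-1) ^ j * (k.choose (2 * j) : R) * s ^ (k - 2 * j) * t ^ (2 * j) +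
      i * ∑ j ∈ range ((k + 1) / 2),
        (-1) ^ j * (k.choose (2 * j + 1) : R) * s ^ (k - (2 * j + 1)) * t ^ (2 * j + 1) := by
  rw [add_comm, add_pow, sum_range_succ_eq_sum_even_add_sum_odd, mul_sum]
  congr 1 <;> refine sum_congr rfl fun j _ => ?_
  · rw [mul_pow, pow_mul, hi]
    ring
  · rw [mul_pow, pow_succ, pow_mul, hi]
    ring

theorem Squarefree.of_map {M N F : Type*} [Monoid M] [Monoid N] [FunLike F M N]
    [MonoidHomClass F M N] (f : F) [IsLocalHom f] {a : M} (h : Squarefree (f a)) :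
    Squarefree a := fun d hd =>
  isUnit_of_map_unit f d (h (f d) (by simpa only [map_mul] using map_dvd f hd))

namespace MvPolynomial

theorem pow_sub_pow_eq_prod_sub_C_mul {σ K : Type*} [Field K] [Infinite K] {ζ : K} {m : ℕ}
    (hζ : IsPrimitiveRoot ζ m) (hm : 0 < m) (p q : MvPolynomial σ K) :
    p ^ m - q ^ m = ∏ μ ∈ Polynomial.nthRootsFinset m (1 : K), (p - C μ * q) := by
  apply MvPolynomial.funext
  intro v
  simp only [map_sub, map_pow, map_prod, map_mul, eval_C]
  exact hζ.pow_sub_pow_eq_prod_sub_mul _ _ hm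

theorem isLocalHom_map {σ R S : Type*} [CommRing R] [CommRing S] {f : R →+* S} [IsLocalHom f]
    (hf : Function.Injective f) : IsLocalHom (map f : MvPolynomial σ R →+* MvPolynomial σ S) where
  map_nonunit P hP := by
    rw [isUnit_iff] at hP ⊢
    simp only [coeff_map] at hP
    exact ⟨isUnit_of_map_unit f _ hP.1, fun i hi => (IsNilpotent.map_iff hf).mp (hP.2 i hi)⟩

theorem squarefree_of_squarefree_map {σ R S : Type*} [CommRing R] [CommRing S] {f : R →+* S}
    [IsLocalHom f] (hf : Function.Injective f) {p : MvPolynomial σ R}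
    (h : Squarefree (map f p)) : Squarefree p :=
  have := isLocalHom_map (σ := σ) hf
  h.of_map (map f)

theorem idealOfVars_eq_ker_constantCoeff {σ R : Type*} [CommRing R] :
    idealOfVars σ R = RingHom.ker (constantCoeff : MvPolynomial σ R →+* R) := by
  ext p
  rw [← pow_one (idealOfVars σ R), mem_pow_idealOfVars_iff', RingHom.mem_ker, constantCoeff_eq]
  refine ⟨fun h => h 0 (by simp), fun h x hx => ?_⟩
  rwa [(Finsupp.degree_eq_zero_iff x).mp (Nat.lt_one_iff.mp hx)]

theorem prime_X_zero_sub_C_mul_X_one {R : Type*} [CommRing R] [IsDomain R] (c : R) :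
    Prime (X 0 - C c * X 1 : MvPolynomial (Fin 2) R) := by
  have h : finSuccEquiv R 1 (X 0 - C c * X 1) = Polynomial.X - Polynomial.C (C c * X 0) := by
    rw [map_sub, map_mul, finSuccEquiv_X_zero, show (1 : Fin 2) = Fin.succ 0 from rfl,
      finSuccEquiv_X_succ, finSuccEquiv_apply, eval₂Hom_C, RingHom.comp_apply, Polynomial.C_mul]
  rw [← MulEquiv.prime_iff (finSuccEquiv R 1), h]
  exact Polynomial.prime_X_sub_C _

end MvPolynomial

open MvPolynomial

section LinearForm

variable {K : Type*} [Field K]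

noncomputable def linearForm (a b : K) : MvPolynomial (Fin 2) K := C a * X 0 + C b * X 1

theorem prime_linearForm {a b : K} (h : a ≠ 0 ∨ b ≠ 0) : Prime (linearForm a b) := by
  rcases eq_or_ne a 0 with rfl | ha
  · have hb := h.resolve_left (not_not.mpr rfl)
    rw [linearForm, C_0, zero_mul, zero_add]
    exact (associated_unit_mul_left _ _ (hb.isUnit.map C)).symm.prime X_prime
  · have : linearForm a b = C a * (X 0 - C (-(b / a)) * X 1) := by
      rw [linearForm, map_neg, neg_mul, sub_neg_eq_add, mul_add, ← mul_assoc, ← C_mul,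
        mul_div_cancel₀ _ ha]
    rw [this]
    exact (associated_unit_mul_left _ _ (ha.isUnit.map C)).symm.prime
      (prime_X_zero_sub_C_mul_X_one _)

theorem linearForm_dvd_linearForm {a b a' b' : K} (h : linearForm a b ∣ linearForm a' b') :
    a' * b = a * b' := by
  obtain ⟨g, hg⟩ := h
  have := congrArg (eval ![b, -a]) hg
  simp only [linearForm, map_add, map_mul, eval_C, eval_X, Matrix.cons_val_zero,
    Matrix.cons_val_one, Matrix.cons_val_fin_one] at this
  linear_combination this

theorem squarefree_prod_linearForm {ι : Type*} {s : Finset ι} {a b : ι → K}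
    (hne : ∀ i ∈ s, a i ≠ 0 ∨ b i ≠ 0)
    (hindep : ∀ i ∈ s, ∀ j ∈ s, i ≠ j → a j * b i ≠ a i * b j) :
    Squarefree (∏ i ∈ s, linearForm (a i) (b i)) := by
  refine Finset.squarefree_prod_of_pairwise_isCoprime (fun i hi j hj hij => ?_)
    fun i hi => (prime_linearForm (hne i hi)).squarefree
  exact (prime_linearForm (hne i hi)).irreducible.isRelPrime_iff_not_dvd.mpr
    fun hdvd => hindep i hi j hj hij (linearForm_dvd_linearForm hdvd)

end LinearForm

theorem X_zero_add_mul_X_one_pow {i : MvPolynomial (Fin 2) ℂ} (hi : i ^ 2 = -1) (k : ℕ) :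
    (X 0 + i * X 1) ^ k = map (algebraMap ℝ ℂ) (pD k) + i * map (algebraMap ℝ ℂ) (qD k) := by
  rw [add_mul_pow_eq_sum_even_add_mul_sum_odd hi, pD, qD]
  simp [map_sum]

theorem C_I_sq {σ : Type*} : (C I : MvPolynomial σ ℂ) ^ 2 = -1 := by
  rw [← map_pow, I_sq, map_neg, map_one]

theorem X_zero_sub_I_mul_X_one_pow (k : ℕ) :
    (X 0 - C I * X 1) ^ k = map (algebraMap ℝ ℂ) (pD k) - C I * map (algebraMap ℝ ℂ) (qD k) := by
  simpa only [neg_mul, ← sub_eq_add_neg] using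
    X_zero_add_mul_X_one_pow (i := -C I) (by rw [neg_sq, C_I_sq]) k

theorem pow_add_conj_pow (k : ℕ) :
    (X 0 + C I * X 1) ^ k + (X 0 - C I * X 1) ^ k = 2 * map (algebraMap ℝ ℂ) (pD k) := by
  rw [X_zero_add_mul_X_one_pow C_I_sq, X_zero_sub_I_mul_X_one_pow]
  ring

theorem pow_sub_conj_pow (k : ℕ) :
    (X 0 + C I * X 1) ^ k - (X 0 - C I * X 1) ^ k = 2 * C I * map (algebraMap ℝ ℂ) (qD k) := by
  rw [X_zero_add_mul_X_one_pow C_I_sq, X_zero_sub_I_mul_X_one_pow]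
  ring

theorem squarefree_pow_sub_conj_pow {m : ℕ} (hm : m ≠ 0) :
    Squarefree ((X 0 + C I * X 1) ^ m - (X 0 - C I * X 1) ^ m : MvPolynomial (Fin 2) ℂ) := by
  rw [pow_sub_pow_eq_prod_sub_C_mul (isPrimitiveRoot_exp m hm) (Nat.pos_of_ne_zero hm)]
  have hlin (μ : ℂ) :
      X 0 + C I * X 1 - C μ * (X 0 - C I * X 1) = linearForm (1 - μ) (I * (1 + μ)) := by
    simp only [linearForm, map_sub, map_add, map_mul, map_one]
    ring
  simp only [hlin]
  apply squarefree_prod_linearForm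
  · intro μ _
    by_cases hμ : μ = 1
    · right
      simp [hμ, I_ne_zero]
    · exact .inl (sub_ne_zero.mpr (Ne.symm hμ))
  · intro μ _ ν _ hne h
    have : 2 * I * (μ - ν) = 0 := by linear_combination h
    simp [sub_eq_zero, I_ne_zero, hne] at this

theorem squarefree_qD {k : ℕ} (hk : k ≠ 0) : Squarefree (qD k) := by
  refine squarefree_of_squarefree_map (algebraMap ℝ ℂ).injective ?_
  have h := squarefree_pow_sub_conj_pow hk
  rw [pow_sub_conj_pow] at h
  exact h.of_mul_right

theorem squarefree_pD {k : ℕ} (hk : k ≠ 0) : Squarefree (pD k) := by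
  refine squarefree_of_squarefree_map (algebraMap ℝ ℂ).injective ?_
  have h := squarefree_pow_sub_conj_pow (mul_ne_zero two_ne_zero hk)
  rw [pow_mul', pow_mul', sq_sub_sq, pow_add_conj_pow] at h
  exact h.of_mul_left.of_mul_right

/-- The dihedral Specht ideals `I₀ = (1)`, `I₁ = (x,y)` and `I_n = (q_n)` are radical,
and for even `n` so are `I_{n/2}^{Re} = (p_{n/2})` and `I_{n/2}^{Im} = (q_{n/2})`. -/
theorem stmt6 (n : ℕ) (hn : 3 ≤ n) :
    (Ideal.span ({1} : Set (MvPolynomial (Fin 2) ℝ))).IsRadical ∧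
    (Ideal.span ({X 0, X 1} : Set (MvPolynomial (Fin 2) ℝ))).IsRadical ∧
    (Ideal.span ({qD n} : Set (MvPolynomial (Fin 2) ℝ))).IsRadical ∧
    (Even n →
      (Ideal.span ({pD (n / 2)} : Set (MvPolynomial (Fin 2) ℝ))).IsRadical ∧
      (Ideal.span ({qD (n / 2)} : Set (MvPolynomial (Fin 2) ℝ))).IsRadical) := by
  have hvars : Ideal.span ({X 0, X 1} : Set (MvPolynomial (Fin 2) ℝ)) = idealOfVars (Fin 2) ℝ := by
    rw [idealOfVars]
    congr 1
    ext p
    simp [Fin.exists_fin_two, eq_comm]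
  refine ⟨?_, ?_, ?_, fun _ => ⟨?_, ?_⟩⟩
  · rw [Ideal.span_singleton_one]
    exact le_top
  · rw [hvars, idealOfVars_eq_ker_constantCoeff]
    exact (RingHom.ker_isPrime _).isRadical
  · exact isRadical_iff_span_singleton.mp (squarefree_qD (by omega)).isRadical
  · exact isRadical_iff_span_singleton.mp (squarefree_pD (by omega)).isRadical
  · exact isRadical_iff_span_singleton.mp (squarefree_qD (by omega)).isRadical
end

section
/- Let λ ≠ μ be partitions with |λ| + |μ| = n. The isotypic component of K[X] with respect to the irreducible Dₙ-representation 𝕊^{{λ,μ}}, i.e. the sum of all Dₙ-submodules of K[X] isomorphic to 𝕊^{{λ,μ}}, is contained in the D-Specht ideal I_{{λ,μ}}^D. -/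
/-!
Let `f` be the image of a `B`-Specht polynomial `v = spe_T(X²) spe_S(X²) ∏_{j ∈ S} X_j` under a
`Dₙ`-equivariant isomorphism, so that every element of `Dₙ` negating `v` also negates `f`.
Exchanging the two entries `a`, `b` of a column of `T` or of `S`, with or without switching both
their signs, negates `v`; hence `X_a - X_b` and `X_a + X_b` divide `f`. These linear forms are
pairwise non-associated primes, so `f = spe_T(X²) spe_S(X²) g`. Switching the signs of one variable
indexed by `S` and one not indexed by `S` negates `v` and fixes the two Vandermonde factors, hence
negates `g`. Comparing coefficients, every monomial of `g` has either all exponents in `S` odd or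
all exponents outside `S` odd, so `g` lies in the monomial ideal `(∏_{j ∈ S} X_j, ∏_{j ∉ S} X_j)`
and `f` in the ideal generated by `spe_{(T,S)}` and `spe_{(S,T)}`. These `v` span the Specht module.
-/

open MvPolynomial

/-- `l` is (the list of parts of) a partition: weakly decreasing positive entries. -/
def IsPtn (l : List ℕ) : Prop := l.Pairwise (· ≥ ·) ∧ ∀ x ∈ l, 0 < x

/-- `(i, c)` (row `i`, column `c`, both 0-indexed) is a cell of the Young diagram of `l`. -/
def IsCell (l : List ℕ) (p : ℕ × ℕ) : Prop := p.2 < l.getD p.1 0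

/-- Length of column `c` (0-indexed) of the Young diagram of `l`. -/
def colLen (l : List ℕ) (c : ℕ) : ℕ := l.countP fun x => decide (c < x)

/-- `(tT, tS)` is a bitableau of shape `(l, m)`: a filling of the two Young diagrams with
the integers `Fin n`, each occurring exactly once. -/
def IsBitableau (n : ℕ) (l m : List ℕ) (tT tS : ℕ × ℕ → Fin n) : Prop :=
  (∀ p q, IsCell l p → IsCell l q → tT p = tT q → p = q) ∧
  (∀ p q, IsCell m p → IsCell m q → tS p = tS q → p = q) ∧
  (∀ p q, IsCell l p → IsCell m q → tT p ≠ tS q) ∧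
  ∀ k : Fin n, (∃ p, IsCell l p ∧ tT p = k) ∨ (∃ p, IsCell m p ∧ tS p = k)

/-- The `S`-Specht polynomial of the tableau `t` of shape `l`, evaluated at the squared
variables: the product over all columns of the Vandermonde determinant of the squares of the
variables indexed by the column entries. -/
noncomputable def speSsq (K : Type*) [CommRing K] (n : ℕ) (l : List ℕ) (t : ℕ × ℕ → Fin n) :
    MvPolynomial (Fin n) K :=
  ∏ c ∈ Finset.range (l.getD 0 0), ∏ i ∈ Finset.range (colLen l c),
    ∏ j ∈ Finset.range (colLen l c),
      if i < j then X (t (i, c)) ^ 2 - X (t (j, c)) ^ 2 else 1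

/-- The product of the variables indexed by the entries of a tableau of shape `l`. -/
noncomputable def prodVars (K : Type*) [CommRing K] (n : ℕ) (l : List ℕ) (t : ℕ × ℕ → Fin n) :
    MvPolynomial (Fin n) K :=
  ∏ c ∈ Finset.range (l.getD 0 0), ∏ i ∈ Finset.range (colLen l c), X (t (i, c))

/-- The `B`-Specht polynomial of the bitableau `(tT, tS)` of shape `(l, m)`. -/
noncomputable def speB (K : Type*) [CommRing K] (n : ℕ) (l m : List ℕ)
    (tT tS : ℕ × ℕ → Fin n) : MvPolynomial (Fin n) K :=
  speSsq K n l tT * speSsq K n m tS * prodVars K n m tS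

/-- The `D`-Specht polynomial of a bitableau of shape `(l, l)`; sign `true` is `+`. -/
noncomputable def speD (K : Type*) [CommRing K] (n : ℕ) (sign : Bool) (l : List ℕ)
    (tT tS : ℕ × ℕ → Fin n) : MvPolynomial (Fin n) K :=
  if sign then speB K n l l tT tS + speB K n l l tS tT
  else speB K n l l tT tS - speB K n l l tS tT

/-- Dipartitions: an unordered pair of partitions, or a partition with a sign
(`true` is `+`, `false` is `−`). -/
inductive Dipart : Type
  | pair (s : Multiset (List ℕ)) : Dipart
  | signed (l : List ℕ) (sign : Bool) : Dipart

/-- A dipartition of `n`: an unordered pair of distinct partitions whose sizes sum to `n`,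
or a signed partition of `n/2` (for even `n`). -/
def Dipart.Valid (n : ℕ) : Dipart → Prop
  | .pair s => ∃ l m : List ℕ, s = {l, m} ∧ l ≠ m ∧ IsPtn l ∧ IsPtn m ∧ l.sum + m.sum = n
  | .signed l _ => IsPtn l ∧ 2 * l.sum = n

/-- The bidominance order on bipartitions: `bidom l m w t` means `(l,m) ⊴_B (w,t)`. -/
def bidom (l m w t : List ℕ) : Prop :=
  ∀ j : ℕ, 1 ≤ j →
    ((l.take j).sum + (m.take j).sum ≤ (w.take j).sum + (t.take j).sum ∧
      l.getD (j - 1) 0 + ((l.take (j - 1)).sum + (m.take (j - 1)).sum)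
        ≤ w.getD (j - 1) 0 + ((w.take (j - 1)).sum + (t.take (j - 1)).sum))

/-- `predD l m t w` means `{l,m} ≼_D {t,w}` for unordered pairs of partitions. -/
def predD (l m t w : List ℕ) : Prop :=
  (bidom l m t w ∨ bidom l m w t) ∧ (bidom m l t w ∨ bidom m l w t)

/-- The didominance relation `⊴_D` on dipartitions. -/
def didom : Dipart → Dipart → Prop
  | .pair s, .pair s' => ∃ l m t w, s = {l, m} ∧ s' = {t, w} ∧ predD l m t w
  | .pair s, .signed l' _ => ∃ l m, s = {l, m} ∧ predD l m l' l'
  | .signed l' _, .pair s => ∃ t w, s = {t, w} ∧ predD l' l' t w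
  | .signed l b, .signed m b' => (l = m ∧ b = b') ∨ (l ≠ m ∧ predD l l m m)

/-- The `B`-Specht ideal of shape `(l, m)`. -/
noncomputable def IdealB (K : Type*) [CommRing K] (n : ℕ) (l m : List ℕ) :
    Ideal (MvPolynomial (Fin n) K) :=
  Ideal.span {f | ∃ tT tS, IsBitableau n l m tT tS ∧ f = speB K n l m tT tS}

/-- The `D`-Specht ideal of a dipartition.  For an unordered pair `{l,m}` it is generated by
all `B`-Specht polynomials of shapes `(l,m)` and `(m,l)`; for a signed partition it is
generated by the `D`-Specht polynomials. -/
noncomputable def IdealD (K : Type*) [CommRing K] (n : ℕ) :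
    Dipart → Ideal (MvPolynomial (Fin n) K)
  | .pair s => Ideal.span
      {f | ∃ l m tT tS, s = {l, m} ∧ IsBitableau n l m tT tS ∧ f = speB K n l m tT tS}
  | .signed lam b => Ideal.span
      {f | ∃ tT tS, IsBitableau n lam lam tT tS ∧ f = speD K n b lam tT tS}

/-- The variety of the `B`-Specht ideal in `Kⁿ`. -/
def varB (K : Type*) [CommRing K] (n : ℕ) (l m : List ℕ) : Set (Fin n → K) :=
  {x | ∀ f ∈ IdealB K n l m, MvPolynomial.eval x f = 0}

/-- The variety of the `D`-Specht ideal in `Kⁿ`. -/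
def varD (K : Type*) [CommRing K] (n : ℕ) (d : Dipart) : Set (Fin n → K) :=
  {x | ∀ f ∈ IdealD K n d, MvPolynomial.eval x f = 0}

/-- The signed-permutation action on `K[X₁,…,Xₙ]`: `X i ↦ ε i · X (σ i)`. -/
noncomputable def dact (K : Type*) [CommRing K] (n : ℕ) (ε : Fin n → ℤˣ)
    (σ : Equiv.Perm (Fin n)) : MvPolynomial (Fin n) K →ₐ[K] MvPolynomial (Fin n) K :=
  MvPolynomial.aeval fun i => ((ε i : ℤ) : MvPolynomial (Fin n) K) * X (σ i)


namespace MvPolynomial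

variable {σ R K : Type*}

theorem prime_X_add_C_mul_X [CommRing R] [IsDomain R] [DecidableEq σ] {a b : σ} (hab : a ≠ b)
    (s : R) : Prime (X a + C s * X b : MvPolynomial σ R) := by
  let φ := (renameEquiv R (Equiv.optionSubtypeNe a).symm).trans
    (optionEquivLeft R {i // i ≠ a})
  have hφ : φ (X a + C s * X b) = Polynomial.X - Polynomial.C (-(C s * X ⟨b, hab.symm⟩)) := by
    simp [φ, Equiv.optionSubtypeNe_symm_of_ne hab.symm, optionEquivLeft_X_some,
      optionEquivLeft_X_none, optionEquivLeft_C]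
  rw [← MulEquiv.prime_iff φ.toMulEquiv]
  exact hφ ▸ Polynomial.prime_X_sub_C _

theorem X_sq_sub_X_sq_ne_zero [CommRing R] [Nontrivial R] {a b : σ} (hab : a ≠ b) :
    (X a ^ 2 - X b ^ 2 : MvPolynomial σ R) ≠ 0 := by
  rw [sub_ne_zero, X_pow_eq_monomial, X_pow_eq_monomial, Ne, monomial_left_inj one_ne_zero,
    Finsupp.single_left_inj two_ne_zero]
  exact hab

theorem not_dvd_X_add_C_mul_X [Field K] [DecidableEq σ] {a b a' b' : σ} {s s' : K}
    (hab' : a' ≠ b') (hs' : s' ≠ 0) (hne : (a, b, s) ≠ (a', b', s'))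
    (hswap : (a', b') ≠ (b, a)) :
    ¬ (X a + C s * X b : MvPolynomial σ K) ∣ X a' + C s' * X b' := by
  have of_eval : ∀ x : σ → K, x a + s * x b = 0 → x a' + s' * x b' ≠ 0 →
      ¬ (X a + C s * X b : MvPolynomial σ K) ∣ X a' + C s' * X b' := by
    rintro x h0 h1 ⟨q, hq⟩
    apply h1
    simpa [h0] using congrArg (eval x) hq
  by_cases hp : (a, b) = (a', b')
  · obtain ⟨rfl, rfl⟩ := Prod.mk.inj hp
    have hss : s ≠ s' := fun h => hne (by rw [h])
    refine of_eval (fun i => if i = a then -s else 1) (by simp [hab'.symm]) ?_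
    simpa [hab'.symm, neg_add_eq_zero] using hss
  · obtain ⟨w, hw, hwa, hwb⟩ : ∃ w, (w = a' ∨ w = b') ∧ w ≠ a ∧ w ≠ b := by
      by_contra! h
      have h1 : a' = a ∨ a' = b := or_iff_not_imp_left.2 (h a' (Or.inl rfl))
      have h2 : b' = a ∨ b' = b := or_iff_not_imp_left.2 (h b' (Or.inr rfl))
      rcases h1 with rfl | rfl <;> rcases h2 with rfl | rfl <;> simp_all
    refine of_eval (fun i => if i = w then 1 else 0) (by simp [hwa.symm, hwb.symm]) ?_
    rcases hw with rfl | rfl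
    · simp [hab'.symm]
    · simpa [hab'] using hs'

theorem prod_X_sq_sub_X_sq_dvd [Field K] [NeZero (2 : K)] [DecidableEq σ] {P : Finset (σ × σ)}
    (hP : ∀ p ∈ P, p.swap ∉ P) {f : MvPolynomial σ K}
    (hsub : ∀ p ∈ P, X p.1 - X p.2 ∣ f) (hadd : ∀ p ∈ P, X p.1 + X p.2 ∣ f) :
    ∏ p ∈ P, (X p.1 ^ 2 - X p.2 ^ 2) ∣ f := by
  classical
  have hne : ∀ p ∈ P, p.1 ≠ p.2 := by
    rintro ⟨a, b⟩ hp (rfl : a = b)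
    exact hP _ hp hp
  have one_ne : (1 : K) ≠ -1 := fun h => two_ne_zero (α := K) (by linear_combination h)
  have hfac : ∀ p : σ × σ,
      X p.1 ^ 2 - X p.2 ^ 2 = ∏ s ∈ ({1, -1} : Finset K), (X p.1 + C s * X p.2) := by
    intro p
    rw [Finset.prod_pair one_ne]
    simp only [map_one, map_neg]
    ring
  rw [Finset.prod_congr rfl fun p _ => hfac p, ← Finset.prod_product']
  refine Finset.prod_dvd_of_isRelPrime ?_ ?_
  · rintro ⟨p, s⟩ hx ⟨q, t⟩ hy hxy
    simp only [Finset.coe_product, Set.mem_prod, Finset.mem_coe, Finset.mem_insert,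
      Finset.mem_singleton] at hx hy
    refine ((prime_X_add_C_mul_X (hne p hx.1) s).irreducible.isRelPrime_iff_not_dvd).2
      (not_dvd_X_add_C_mul_X (hne q hy.1) ?_ (by simpa [Prod.ext_iff] using hxy) ?_)
    · rcases hy.2 with rfl | rfl <;> simp
    · exact fun h => hP p hx.1 (by rw [Prod.swap, ← h]; exact hy.1)
  · rintro ⟨p, s⟩ hx
    simp only [Finset.mem_product, Finset.mem_insert, Finset.mem_singleton] at hx
    rcases hx with ⟨hp, rfl | rfl⟩
    · simpa using hadd p hp
    · simpa [← sub_eq_add_neg] using hsub p hp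

theorem dvd_sub_aeval [CommRing R] (u : σ → MvPolynomial σ R) {d : MvPolynomial σ R}
    (hu : ∀ i, d ∣ X i - u i) (f : MvPolynomial σ R) : d ∣ f - aeval u f := by
  have h : (Ideal.Quotient.mkₐ R (Ideal.span {d})).comp (aeval u) =
      Ideal.Quotient.mkₐ R (Ideal.span {d}) :=
    algHom_ext fun i => by
      simpa [Ideal.Quotient.mkₐ_eq_mk, Ideal.Quotient.eq, Ideal.mem_span_singleton,
        dvd_sub_comm] using hu i
  rw [← Ideal.mem_span_singleton, ← Ideal.Quotient.eq]
  exact (DFunLike.congr_fun h f).symm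

theorem dvd_of_aeval_eq_neg [Field K] [NeZero (2 : K)] (u : σ → MvPolynomial σ K)
    {d f : MvPolynomial σ K} (hu : ∀ i, d ∣ X i - u i) (hf : aeval u f = -f) : d ∣ f := by
  have h2 : d ∣ C 2 * f := by
    have h := dvd_sub_aeval u hu f
    rwa [hf, sub_neg_eq_add, ← two_mul, ← map_ofNat C] at h
  exact ((Ne.isUnit two_ne_zero).map C).dvd_mul_left.1 h2

theorem prod_X_eq_monomial [CommSemiring R] (B : Finset σ) :
    ∏ j ∈ B, (X j : MvPolynomial σ R) = monomial (∑ j ∈ B, Finsupp.single j 1) 1 := by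
  simp [X, monomial_sum_one]

end MvPolynomial

theorem Finsupp.sum_single_one_le_iff {σ : Type*} [DecidableEq σ] (B : Finset σ)
    (β : σ →₀ ℕ) : ∑ j ∈ B, Finsupp.single j 1 ≤ β ↔ ∀ j ∈ B, 1 ≤ β j := by
  simp only [Finsupp.le_def, Finsupp.finsetSum_apply, Finsupp.single_apply, Finset.sum_ite_eq']
  refine ⟨fun h j hj => by simpa [hj] using h j, fun h i => ?_⟩
  split_ifs with hi
  exacts [h i hi, Nat.zero_le _]

theorem Finset.prod_comp_swap_of_mem_iff {ι M : Type*} [DecidableEq ι] [CommMonoid M]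
    (f : ι → M) {s : Finset ι} {a b : ι} (h : a ∈ s ↔ b ∈ s) :
    ∏ x ∈ s, f (Equiv.swap a b x) = ∏ x ∈ s, f x := by
  by_cases ha : a ∈ s
  · refine Equiv.Perm.prod_comp _ s f fun x hx => ?_
    rcases (Equiv.swap_apply_ne_self_iff.1 hx).2 with rfl | rfl
    exacts [ha, h.1 ha]
  · refine Finset.prod_congr rfl fun x hx => ?_
    rw [Equiv.swap_apply_of_ne_of_ne (ne_of_mem_of_not_mem hx ha)
      (ne_of_mem_of_not_mem hx (mt h.2 ha))]

theorem Set.InjOn.swap_apply {α β : Type*} [DecidableEq α] [DecidableEq β] {f : α → β}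
    {s : Set α} (hf : Set.InjOn f s) {x y z : α} (hx : x ∈ s) (hy : y ∈ s) (hz : z ∈ s) :
    Equiv.swap (f x) (f y) (f z) = f (Equiv.swap x y z) := by
  simp only [Equiv.swap_apply_def]
  split_ifs <;> simp_all [hf.eq_iff]

open Finset in
theorem prod_range_sub_comp_swap {R : Type*} [CommRing R] (y : ℕ → R) {i₀ j₀ N : ℕ}
    (hij : i₀ < j₀) (hj : j₀ < N) :
    ∏ i ∈ range N, ∏ j ∈ range N,
        (if i < j then y (Equiv.swap i₀ j₀ i) - y (Equiv.swap i₀ j₀ j) else 1) =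
      -∏ i ∈ range N, ∏ j ∈ range N, if i < j then y i - y j else 1 := by
  set c : R := ∏ i : Fin N, ∏ _j ∈ Ioi i, (-1 : R)
  have hdet : ∀ z : ℕ → R,
      ∏ i ∈ range N, ∏ j ∈ range N, (if i < j then z i - z j else 1) =
        c * (Matrix.vandermonde fun i : Fin N => z i).det := by
    intro z
    rw [Matrix.det_vandermonde, ← prod_mul_distrib, ← Fin.prod_univ_eq_prod_range]
    refine prod_congr rfl fun i _ => ?_
    rw [← Fin.prod_univ_eq_prod_range (fun j => if (i : ℕ) < j then z i - z j else 1),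
      ← prod_mul_distrib]
    simp only [Fin.val_fin_lt, ← prod_filter, filter_lt_eq_Ioi]
    exact prod_congr rfl fun j _ => by ring
  let s : Equiv.Perm (Fin N) := Equiv.swap ⟨i₀, hij.trans hj⟩ ⟨j₀, hj⟩
  have hs : (Matrix.vandermonde fun i : Fin N => y (Equiv.swap i₀ j₀ i)) =
      (Matrix.vandermonde fun i : Fin N => y i).submatrix s id := by
    ext i j
    simp [s, Matrix.vandermonde_apply, ← Fin.val_injective.swap_apply]
  rw [hdet (fun i => y (Equiv.swap i₀ j₀ i)), hdet, hs, Matrix.det_permute,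
    Equiv.Perm.sign_swap (by simp [Fin.ext_iff, hij.ne])]
  simp

def flipSigns {ι : Type*} [DecidableEq ι] (E : Finset ι) (i : ι) : ℤˣ :=
  if i ∈ E then -1 else 1

theorem prod_flipSigns {ι : Type*} [DecidableEq ι] (A E : Finset ι) :
    ∏ i ∈ A, flipSigns E i = (-1) ^ (A ∩ E).card := by
  simp [flipSigns, Finset.prod_ite_mem]

theorem prod_flipSigns_pair {ι : Type*} [DecidableEq ι] {A : Finset ι} {a b : ι} (hab : a ≠ b)
    (h : a ∈ A ↔ b ∈ A) : ∏ j ∈ A, flipSigns {a, b} j = 1 := by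
  rw [prod_flipSigns]
  by_cases ha : a ∈ A
  · rw [Finset.inter_eq_right.2 (Finset.insert_subset ha (Finset.singleton_subset_iff.2 (h.1 ha))),
      Finset.card_pair hab]
    rfl
  · rw [Finset.disjoint_iff_inter_eq_empty.1 (Finset.disjoint_insert_right.2
      ⟨ha, Finset.disjoint_singleton_right.2 (mt h.2 ha)⟩)]
    rfl

section Action

variable {K : Type*} [CommRing K] {n : ℕ}

theorem dact_X (ε : Fin n → ℤˣ) (σ : Equiv.Perm (Fin n)) (i : Fin n) :
    dact K n ε σ (X i) = ((ε i : ℤ) : MvPolynomial (Fin n) K) * X (σ i) := by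
  simp [dact]

theorem dact_X_sq (ε : Fin n → ℤˣ) (σ : Equiv.Perm (Fin n)) (i : Fin n) :
    dact K n ε σ (X i ^ 2) = X (σ i) ^ 2 := by
  rw [map_pow, dact_X, mul_pow, ← Int.cast_pow, ← Units.val_pow_eq_pow_val, Int.units_sq]
  simp

theorem dact_speSsq (ε : Fin n → ℤˣ) (σ : Equiv.Perm (Fin n)) (l : List ℕ)
    (t : ℕ × ℕ → Fin n) :
    dact K n ε σ (speSsq K n l t) = speSsq K n l (fun p => σ (t p)) := by
  simp only [speSsq, map_prod, apply_ite, map_one, map_sub, dact_X_sq]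

theorem dact_prod_X (ε : Fin n → ℤˣ) (σ : Equiv.Perm (Fin n)) (A : Finset (Fin n)) :
    dact K n ε σ (∏ j ∈ A, X j) =
      (((∏ j ∈ A, ε j : ℤˣ) : ℤ) : MvPolynomial (Fin n) K) * ∏ j ∈ A, X (σ j) := by
  simp [map_prod, dact_X, Finset.prod_mul_distrib]

theorem dact_one_monomial (ε : Fin n → ℤˣ) (α : Fin n →₀ ℕ) (a : K) :
    dact K n ε 1 (monomial α a) = monomial α ((∏ i, ((ε i : ℤ) : K) ^ α i) * a) := by
  rw [dact, aeval_monomial, monomial_eq, Finsupp.prod, Finsupp.prod,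
    ← Finset.prod_subset α.support.subset_univ fun i _ hi => by
      rw [Finsupp.notMem_support_iff.1 hi, pow_zero]]
  simp only [algebraMap_eq, Equiv.Perm.coe_one, id_eq, mul_pow, Finset.prod_mul_distrib,
    prod_X_pow_eq_monomial, C_mul, map_prod, C_pow, map_intCast]
  ring

theorem coeff_dact_one (ε : Fin n → ℤˣ) (β : Fin n →₀ ℕ) (q : MvPolynomial (Fin n) K) :
    coeff β (dact K n ε 1 q) = (∏ i, ((ε i : ℤ) : K) ^ β i) * coeff β q := by
  induction q using MvPolynomial.induction_on' with
  | monomial α a =>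
    rw [dact_one_monomial, coeff_monomial, coeff_monomial]
    split_ifs with h
    · rw [h]
    · rw [mul_zero]
  | add p q hp hq => rw [map_add, coeff_add, coeff_add, hp, hq, mul_add]

end Action

section SignChanges

variable {K : Type*} [Field K] [NeZero (2 : K)] {n : ℕ}

theorem X_sub_X_dvd_of_dact_swap {a b : Fin n} {f : MvPolynomial (Fin n) K}
    (hf : dact K n (flipSigns ∅) (Equiv.swap a b) f = -f) : X a - X b ∣ f := by
  refine dvd_of_aeval_eq_neg _ (fun i => ?_) hf
  rcases eq_or_ne i a with rfl | hia
  · simp [flipSigns]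
  rcases eq_or_ne i b with rfl | hib
  · simp [flipSigns, dvd_sub_comm]
  · simp [flipSigns, Equiv.swap_apply_of_ne_of_ne hia hib]

theorem X_add_X_dvd_of_dact_swap {a b : Fin n} {f : MvPolynomial (Fin n) K}
    (hf : dact K n (flipSigns {a, b}) (Equiv.swap a b) f = -f) : X a + X b ∣ f := by
  refine dvd_of_aeval_eq_neg _ (fun i => ?_) hf
  rcases eq_or_ne i a with rfl | hia
  · simp [flipSigns]
  rcases eq_or_ne i b with rfl | hib
  · simp [flipSigns, add_comm]
  · simp [flipSigns, hia, hib, Equiv.swap_apply_of_ne_of_ne hia hib]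

theorem odd_add_of_dact_flipSigns {u k : Fin n} (huk : u ≠ k) {h : MvPolynomial (Fin n) K}
    (hh : dact K n (flipSigns {u, k}) 1 h = -h) {β : Fin n →₀ ℕ} (hβ : β ∈ h.support) :
    Odd (β u + β k) := by
  have hc := congrArg (coeff β) hh
  have hsign : ∏ i, (((flipSigns {u, k} i : ℤˣ) : ℤ) : K) ^ β i = (-1) ^ (β u + β k) := by
    have hi : ∀ i, (((flipSigns {u, k} i : ℤˣ) : ℤ) : K) ^ β i =
        if i ∈ ({u, k} : Finset _) then (-1) ^ β i else 1 := by
      intro i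
      unfold flipSigns
      split_ifs <;> simp
    rw [Fintype.prod_congr _ _ hi, Fintype.prod_ite_mem, Finset.prod_pair huk, pow_add]
  rw [coeff_dact_one, hsign, coeff_neg] at hc
  refine (neg_one_pow_eq_neg_one_iff_odd fun h => two_ne_zero (α := K) ?_).1
    (mul_right_cancel₀ (mem_support_iff.1 hβ) (hc.trans (neg_one_mul _).symm))
  linear_combination -h

theorem mem_span_prod_X_of_dact_flipSigns (A : Finset (Fin n)) {h : MvPolynomial (Fin n) K}
    (hh : ∀ u ∈ A, ∀ k ∉ A, dact K n (flipSigns {u, k}) 1 h = -h) :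
    h ∈ Ideal.span {∏ j ∈ A, X j, ∏ j ∈ Aᶜ, X j} := by
  rw [prod_X_eq_monomial, prod_X_eq_monomial,
    ← Set.image_pair (fun s => monomial s (1 : K)), mem_ideal_span_monomial_image]
  intro β hβ
  have hodd : ∀ u ∈ A, ∀ k ∉ A, Odd (β u + β k) := fun u hu k hk =>
    odd_add_of_dact_flipSigns (ne_of_mem_of_not_mem hu hk) (hh u hu k hk) hβ
  by_cases hA : ∀ j ∈ A, Odd (β j)
  · exact ⟨_, Or.inl rfl, (Finsupp.sum_single_one_le_iff A β).2 fun j hj => (hA j hj).pos⟩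
  · obtain ⟨j₀, hj₀, heven⟩ : ∃ j ∈ A, ¬ Odd (β j) := by simpa using hA
    refine ⟨_, Or.inr rfl, (Finsupp.sum_single_one_le_iff Aᶜ β).2 fun k hk => ?_⟩
    have hk' : k ∉ A := Finset.mem_compl.1 hk
    exact (Nat.not_even_iff_odd.1 fun hev =>
      heven (Nat.odd_add.1 (hodd j₀ hj₀ k hk') |>.2 hev)).pos

end SignChanges

section YoungDiagram

variable {l : List ℕ}

theorem List.getD_le_getD_zero_of_pairwise (hl : l.Pairwise (· ≥ ·)) (i : ℕ) :
    l.getD i 0 ≤ l.getD 0 0 := by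
  cases l with
  | nil => simp
  | cons a l =>
    cases i with
    | zero => rfl
    | succ i =>
      rw [List.getD_cons_succ, List.getD_cons_zero, List.getD_eq_getElem?_getD]
      cases h : l[i]? with
      | none => exact Nat.zero_le a
      | some x => exact List.rel_of_pairwise_cons hl (List.mem_of_getElem? h)

theorem isCell_iff_lt_colLen (hl : l.Pairwise (· ≥ ·)) {i c : ℕ} :
    IsCell l (i, c) ↔ i < colLen l c := by
  induction l generalizing i with
  | nil => simp [IsCell, colLen]
  | cons a l ih =>
    by_cases hca : c < a
    · cases i with
      | zero => simp [IsCell, colLen, hca]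
      | succ i => simpa [IsCell, colLen, List.countP_cons, hca] using ih hl.of_cons
    · have h0 : colLen l c = 0 := List.countP_eq_zero.2 fun x hx => by
        simpa using (List.rel_of_pairwise_cons hl hx).trans (not_lt.1 hca)
      have hcell : ¬ IsCell (a :: l) (i, c) := fun h =>
        hca (lt_of_lt_of_le h (List.getD_le_getD_zero_of_pairwise hl i))
      simp only [colLen] at h0
      simp [hcell, colLen, hca, h0]

theorem IsCell.lt_getD_zero (hl : l.Pairwise (· ≥ ·)) {i c : ℕ} (h : IsCell l (i, c)) :
    c < l.getD 0 0 :=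
  lt_of_lt_of_le h (List.getD_le_getD_zero_of_pairwise hl i)

theorem IsCell.of_le (hl : l.Pairwise (· ≥ ·)) {i j c : ℕ} (hij : i ≤ j)
    (h : IsCell l (j, c)) : IsCell l (i, c) :=
  (isCell_iff_lt_colLen hl).2 (hij.trans_lt ((isCell_iff_lt_colLen hl).1 h))

end YoungDiagram

section Tableau

open Finset

variable {K : Type*} [CommRing K] {n : ℕ} {l : List ℕ} {t : ℕ × ℕ → Fin n}

def entrySet (l : List ℕ) (t : ℕ × ℕ → Fin n) : Finset (Fin n) :=
  ((range (l.getD 0 0)).sigma fun c => range (colLen l c)).image fun x => t (x.2, x.1)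

def columnPairs (l : List ℕ) (t : ℕ × ℕ → Fin n) : Finset (Fin n × Fin n) :=
  ((range (l.getD 0 0)).sigma fun c =>
    (range (colLen l c) ×ˢ range (colLen l c)).filter fun ij => ij.1 < ij.2).image
      fun x => (t (x.2.1, x.1), t (x.2.2, x.1))

theorem mem_entrySet (hl : l.Pairwise (· ≥ ·)) {k : Fin n} :
    k ∈ entrySet l t ↔ ∃ p, IsCell l p ∧ t p = k := by
  simp only [entrySet, mem_image, mem_sigma, mem_range]
  constructor
  · rintro ⟨⟨c, i⟩, ⟨-, hi⟩, rfl⟩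
    exact ⟨(i, c), (isCell_iff_lt_colLen hl).2 hi, rfl⟩
  · rintro ⟨⟨i, c⟩, hp, rfl⟩
    exact ⟨⟨c, i⟩, ⟨hp.lt_getD_zero hl, (isCell_iff_lt_colLen hl).1 hp⟩, rfl⟩

theorem mem_columnPairs (hl : l.Pairwise (· ≥ ·)) {p : Fin n × Fin n} :
    p ∈ columnPairs l t ↔
      ∃ i j c, i < j ∧ IsCell l (j, c) ∧ (t (i, c), t (j, c)) = p := by
  simp only [columnPairs, mem_image, mem_sigma, mem_filter, mem_product, mem_range]
  constructor
  · rintro ⟨⟨c, i, j⟩, ⟨-, ⟨-, hj⟩, hij⟩, rfl⟩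
    exact ⟨i, j, c, hij, (isCell_iff_lt_colLen hl).2 hj, rfl⟩
  · rintro ⟨i, j, c, hij, hj, rfl⟩
    have hj' := (isCell_iff_lt_colLen hl).1 hj
    exact ⟨⟨c, i, j⟩, ⟨hj.lt_getD_zero hl, ⟨hij.trans hj', hj'⟩, hij⟩, rfl⟩

theorem mem_entrySet_of_mem_columnPairs (hl : l.Pairwise (· ≥ ·)) {p : Fin n × Fin n}
    (hp : p ∈ columnPairs l t) : p.1 ∈ entrySet l t ∧ p.2 ∈ entrySet l t := by
  obtain ⟨i, j, c, hij, hj, rfl⟩ := (mem_columnPairs hl).1 hp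
  exact ⟨(mem_entrySet hl).2 ⟨_, hj.of_le hl hij.le, rfl⟩,
    (mem_entrySet hl).2 ⟨_, hj, rfl⟩⟩

theorem ne_of_mem_columnPairs (hl : l.Pairwise (· ≥ ·)) (ht : Set.InjOn t {p | IsCell l p})
    {p : Fin n × Fin n} (hp : p ∈ columnPairs l t) : p.1 ≠ p.2 := by
  obtain ⟨i, j, c, hij, hj, rfl⟩ := (mem_columnPairs hl).1 hp
  intro h
  have := ht (hj.of_le hl hij.le) hj h
  simp only [Prod.mk.injEq] at this
  omega

theorem swap_notMem_columnPairs (hl : l.Pairwise (· ≥ ·)) (ht : Set.InjOn t {p | IsCell l p})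
    {p : Fin n × Fin n} (hp : p ∈ columnPairs l t) : p.swap ∉ columnPairs l t := by
  intro hq
  obtain ⟨i, j, c, hij, hj, rfl⟩ := (mem_columnPairs hl).1 hp
  obtain ⟨i', j', c', hij', hj', hq⟩ := (mem_columnPairs hl).1 hq
  simp only [Prod.swap_prod_mk, Prod.mk.injEq] at hq
  have h1 := ht (hj'.of_le hl hij'.le) hj hq.1
  have h2 := ht hj' (hj.of_le hl hij.le) hq.2
  simp only [Prod.mk.injEq] at h1 h2
  omega

theorem prodVars_eq_prod_entrySet (hl : l.Pairwise (· ≥ ·))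
    (ht : Set.InjOn t {p | IsCell l p}) :
    prodVars K n l t = ∏ j ∈ entrySet l t, X j := by
  rw [entrySet, prod_image, prod_sigma]
  · rfl
  rintro ⟨c, i⟩ hx ⟨c', i'⟩ hy h
  simp only [coe_sigma, Set.mem_sigma_iff, mem_coe, mem_range] at hx hy
  have := ht ((isCell_iff_lt_colLen hl).2 hx.2) ((isCell_iff_lt_colLen hl).2 hy.2) h
  simp_all

theorem speSsq_eq_prod_columnPairs (hl : l.Pairwise (· ≥ ·))
    (ht : Set.InjOn t {p | IsCell l p}) :
    speSsq K n l t = ∏ p ∈ columnPairs l t, (X p.1 ^ 2 - X p.2 ^ 2) := by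
  rw [columnPairs, prod_image, prod_sigma]
  · exact prod_congr rfl fun c _ => by rw [prod_filter, prod_product]
  rintro ⟨c, i, j⟩ hx ⟨c', i', j'⟩ hy h
  simp only [coe_sigma, Set.mem_sigma_iff, mem_coe, mem_filter, mem_product, mem_range,
    Prod.mk.injEq] at hx hy h
  have h1 := ht ((isCell_iff_lt_colLen hl).2 hx.2.1.1) ((isCell_iff_lt_colLen hl).2 hy.2.1.1) h.1
  have h2 := ht ((isCell_iff_lt_colLen hl).2 hx.2.1.2) ((isCell_iff_lt_colLen hl).2 hy.2.1.2) h.2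
  simp_all

theorem speSsq_congr (hl : l.Pairwise (· ≥ ·)) {t' : ℕ × ℕ → Fin n}
    (h : ∀ p, IsCell l p → t p = t' p) : speSsq K n l t = speSsq K n l t' := by
  refine prod_congr rfl fun c _ => prod_congr rfl fun i hi => prod_congr rfl fun j hj => ?_
  rw [mem_range, ← isCell_iff_lt_colLen hl] at hi hj
  rw [h _ hi, h _ hj]

theorem speSsq_swap_of_notMem (hl : l.Pairwise (· ≥ ·)) {a b : Fin n}
    (ha : a ∉ entrySet l t) (hb : b ∉ entrySet l t) :
    speSsq K n l (fun q => Equiv.swap a b (t q)) = speSsq K n l t := by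
  refine speSsq_congr hl fun q hq => Equiv.swap_apply_of_ne_of_ne ?_ ?_
  · exact fun h => ha ((mem_entrySet hl).2 ⟨q, hq, h⟩)
  · exact fun h => hb ((mem_entrySet hl).2 ⟨q, hq, h⟩)

theorem speSsq_ne_zero [IsDomain K] (hl : l.Pairwise (· ≥ ·))
    (ht : Set.InjOn t {p | IsCell l p}) : speSsq K n l t ≠ 0 := by
  rw [speSsq_eq_prod_columnPairs hl ht]
  exact prod_ne_zero_iff.2 fun p hp => X_sq_sub_X_sq_ne_zero (ne_of_mem_columnPairs hl ht hp)

theorem speSsq_swap (hl : l.Pairwise (· ≥ ·)) (ht : Set.InjOn t {p | IsCell l p})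
    {p : Fin n × Fin n} (hp : p ∈ columnPairs l t) :
    speSsq K n l (fun q => Equiv.swap p.1 p.2 (t q)) = -speSsq K n l t := by
  obtain ⟨i₀, j₀, c₀, hij, hj, rfl⟩ := (mem_columnPairs hl).1 hp
  have hcomp : speSsq K n l (fun q => Equiv.swap (t (i₀, c₀)) (t (j₀, c₀)) (t q)) =
      speSsq K n l (fun q => t (Equiv.swap (i₀, c₀) (j₀, c₀) q)) :=
    speSsq_congr hl fun q hq => ht.swap_apply (hj.of_le hl hij.le) hj hq
  have hc₀ := mem_range.2 (hj.lt_getD_zero hl)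
  rw [hcomp]
  unfold speSsq
  rw [← mul_prod_erase _ _ hc₀, ← mul_prod_erase _ _ hc₀, ← neg_mul]
  refine congrArg₂ (· * ·) ?_ (prod_congr rfl fun c hc => ?_)
  · rw [← prod_range_sub_comp_swap (fun i => (X (t (i, c₀)) : MvPolynomial (Fin n) K) ^ 2) hij
      ((isCell_iff_lt_colLen hl).1 hj)]
    refine prod_congr rfl fun i _ => prod_congr rfl fun j _ => ?_
    have key : ∀ k,
        Equiv.swap (i₀, c₀) (j₀, c₀) (k, c₀) = (Equiv.swap i₀ j₀ k, c₀) := by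
      intro k
      simp only [Equiv.swap_apply_def, Prod.mk.injEq, and_true]
      split_ifs <;> rfl
    simp only [key]
  · have hc : c ≠ c₀ := ne_of_mem_erase hc
    have key : ∀ k, Equiv.swap (i₀, c₀) (j₀, c₀) (k, c) = (k, c) := fun k =>
      Equiv.swap_apply_of_ne_of_ne (by simp [hc]) (by simp [hc])
    simp only [key]

end Tableau

section Bitableau

open Finset

variable {K : Type*} {n : ℕ} {l m : List ℕ} {tT tS : ℕ × ℕ → Fin n} {p : Fin n × Fin n}

theorem IsBitableau.symm (h : IsBitableau n l m tT tS) : IsBitableau n m l tS tT :=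
  ⟨h.2.1, h.1, fun p q hp hq => (h.2.2.1 q p hq hp).symm, fun k => (h.2.2.2 k).symm⟩

theorem IsBitableau.injOn_left (h : IsBitableau n l m tT tS) : Set.InjOn tT {p | IsCell l p} :=
  fun p hp q hq => h.1 p q hp hq

theorem IsBitableau.injOn_right (h : IsBitableau n l m tT tS) : Set.InjOn tS {p | IsCell m p} :=
  h.symm.injOn_left

theorem IsBitableau.compl_entrySet (hl : l.Pairwise (· ≥ ·)) (hm : m.Pairwise (· ≥ ·))
    (h : IsBitableau n l m tT tS) : (entrySet m tS)ᶜ = entrySet l tT := by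
  ext k
  rw [mem_compl, mem_entrySet hm, mem_entrySet hl]
  constructor
  · exact fun hk => (h.2.2.2 k).resolve_right hk
  · rintro ⟨p, hp, rfl⟩ ⟨q, hq, hqk⟩
    exact h.2.2.1 p q hp hq hqk.symm

theorem IsBitableau.notMem_entrySet_of_mem_columnPairs (hl : l.Pairwise (· ≥ ·))
    (hm : m.Pairwise (· ≥ ·)) (h : IsBitableau n l m tT tS)
    (hp : p ∈ columnPairs l tT) : p.1 ∉ entrySet m tS ∧ p.2 ∉ entrySet m tS := by
  simpa [← mem_compl, h.compl_entrySet hl hm] using mem_entrySet_of_mem_columnPairs hl hp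

theorem IsBitableau.ne_of_mem_columnPairs (hl : l.Pairwise (· ≥ ·))
    (hm : m.Pairwise (· ≥ ·)) (h : IsBitableau n l m tT tS)
    (hp : p ∈ columnPairs l tT ∪ columnPairs m tS) : p.1 ≠ p.2 := by
  rcases mem_union.1 hp with hp | hp
  exacts [_root_.ne_of_mem_columnPairs hl h.injOn_left hp,
    _root_.ne_of_mem_columnPairs hm h.injOn_right hp]

theorem IsBitableau.disjoint_columnPairs (hl : l.Pairwise (· ≥ ·)) (hm : m.Pairwise (· ≥ ·))
    (h : IsBitableau n l m tT tS) :
    Disjoint (columnPairs l tT) (columnPairs m tS) :=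
  disjoint_left.2 fun _ hp hq =>
    (h.notMem_entrySet_of_mem_columnPairs hl hm hp).1 (mem_entrySet_of_mem_columnPairs hm hq).1

theorem IsBitableau.swap_notMem_columnPairs (hl : l.Pairwise (· ≥ ·))
    (hm : m.Pairwise (· ≥ ·)) (h : IsBitableau n l m tT tS)
    (hp : p ∈ columnPairs l tT ∪ columnPairs m tS) :
    p.swap ∉ columnPairs l tT ∪ columnPairs m tS := by
  wlog hpl : p ∈ columnPairs l tT generalizing l m tT tS
  · rw [union_comm] at hp ⊢
    exact this hm hl h.symm hp ((mem_union.1 hp).resolve_right hpl)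
  rw [mem_union, not_or]
  exact ⟨_root_.swap_notMem_columnPairs hl h.injOn_left hpl, fun hq =>
    (h.notMem_entrySet_of_mem_columnPairs hl hm hpl).2 (mem_entrySet_of_mem_columnPairs hm hq).1⟩

theorem IsBitableau.mem_entrySet_iff_of_mem_columnPairs (hl : l.Pairwise (· ≥ ·))
    (hm : m.Pairwise (· ≥ ·)) (h : IsBitableau n l m tT tS)
    (hp : p ∈ columnPairs l tT ∪ columnPairs m tS) :
    p.1 ∈ entrySet m tS ↔ p.2 ∈ entrySet m tS := by
  rcases mem_union.1 hp with hp | hp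
  · exact iff_of_false (h.notMem_entrySet_of_mem_columnPairs hl hm hp).1
      (h.notMem_entrySet_of_mem_columnPairs hl hm hp).2
  · exact iff_of_true (mem_entrySet_of_mem_columnPairs hm hp).1
      (mem_entrySet_of_mem_columnPairs hm hp).2

end Bitableau

def NegatedLike (K : Type*) [CommRing K] (n : ℕ) (v f : MvPolynomial (Fin n) K) : Prop :=
  ∀ (ε : Fin n → ℤˣ) (σ : Equiv.Perm (Fin n)), ∏ i, ε i = 1 →
    dact K n ε σ v = -v → dact K n ε σ f = -f

section SpechtGenerator

open Finset

variable {K : Type*} {n : ℕ} {l m : List ℕ} {tT tS : ℕ × ℕ → Fin n}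

section CommRing

variable [CommRing K]

theorem speB_eq (hm : m.Pairwise (· ≥ ·)) (h : IsBitableau n l m tT tS) :
    speB K n l m tT tS = speSsq K n l tT * speSsq K n m tS * ∏ j ∈ entrySet m tS, X j := by
  rw [speB, prodVars_eq_prod_entrySet hm h.injOn_right]

theorem speB_swap_eq (hl : l.Pairwise (· ≥ ·)) (hm : m.Pairwise (· ≥ ·))
    (h : IsBitableau n l m tT tS) :
    speB K n m l tS tT = speSsq K n l tT * speSsq K n m tS * ∏ j ∈ (entrySet m tS)ᶜ, X j := by
  rw [speB, prodVars_eq_prod_entrySet hl h.injOn_left, h.compl_entrySet hl hm,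
    mul_comm (speSsq _ _ m _)]

theorem speSsq_mul_speSsq_swap (hl : l.Pairwise (· ≥ ·)) (hm : m.Pairwise (· ≥ ·))
    (h : IsBitableau n l m tT tS) {p : Fin n × Fin n}
    (hp : p ∈ columnPairs l tT ∪ columnPairs m tS) :
    speSsq K n l (fun q => Equiv.swap p.1 p.2 (tT q)) *
        speSsq K n m (fun q => Equiv.swap p.1 p.2 (tS q)) =
      -(speSsq K n l tT * speSsq K n m tS) := by
  wlog hpl : p ∈ columnPairs l tT generalizing l m tT tS
  · rw [mul_comm, this hm hl h.symm (by rwa [union_comm]) ((mem_union.1 hp).resolve_left hpl),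
      mul_comm]
  have hA := h.notMem_entrySet_of_mem_columnPairs hl hm hpl
  rw [speSsq_swap hl h.injOn_left hpl, speSsq_swap_of_notMem hm hA.1 hA.2, neg_mul]

theorem dact_speB_swap (hl : l.Pairwise (· ≥ ·)) (hm : m.Pairwise (· ≥ ·))
    (h : IsBitableau n l m tT tS) {p : Fin n × Fin n}
    (hp : p ∈ columnPairs l tT ∪ columnPairs m tS)
    {ε : Fin n → ℤˣ} (hε : ∏ j ∈ entrySet m tS, ε j = 1) :
    dact K n ε (Equiv.swap p.1 p.2) (speB K n l m tT tS) = -speB K n l m tT tS := by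
  rw [speB_eq hm h, map_mul, map_mul, dact_speSsq, dact_speSsq,
    speSsq_mul_speSsq_swap hl hm h hp, dact_prod_X, hε,
    prod_comp_swap_of_mem_iff X (h.mem_entrySet_iff_of_mem_columnPairs hl hm hp)]
  simp

theorem dact_speB_flipSigns (hm : m.Pairwise (· ≥ ·)) (h : IsBitableau n l m tT tS)
    {u k : Fin n} (hu : u ∈ entrySet m tS) (hk : k ∉ entrySet m tS) :
    dact K n (flipSigns {u, k}) 1 (speB K n l m tT tS) = -speB K n l m tT tS := by
  have huk : entrySet m tS ∩ {u, k} = {u} := by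
    ext j
    simp only [mem_inter, mem_insert, mem_singleton]
    constructor
    · rintro ⟨hj, rfl | rfl⟩
      exacts [rfl, absurd hj hk]
    · rintro rfl
      exact ⟨hu, Or.inl rfl⟩
  rw [speB_eq hm h, map_mul, map_mul, dact_speSsq, dact_speSsq, dact_prod_X, prod_flipSigns,
    huk]
  simp

end CommRing

variable [Field K] [NeZero (2 : K)] {f : MvPolynomial (Fin n) K}

theorem speSsq_mul_speSsq_dvd (hl : l.Pairwise (· ≥ ·)) (hm : m.Pairwise (· ≥ ·))
    (h : IsBitableau n l m tT tS) (hf : NegatedLike K n (speB K n l m tT tS) f) :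
    speSsq K n l tT * speSsq K n m tS ∣ f := by
  rw [speSsq_eq_prod_columnPairs hl h.injOn_left, speSsq_eq_prod_columnPairs hm h.injOn_right,
    ← prod_union (h.disjoint_columnPairs hl hm)]
  refine prod_X_sq_sub_X_sq_dvd (fun p hp => h.swap_notMem_columnPairs hl hm hp)
    (fun p hp => ?_) (fun p hp => ?_)
  · have hε : ∀ A : Finset (Fin n), ∏ j ∈ A, flipSigns ∅ j = 1 := by simp [prod_flipSigns]
    exact X_sub_X_dvd_of_dact_swap (hf _ _ (hε _) (dact_speB_swap hl hm h hp (hε _)))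
  · have hne := h.ne_of_mem_columnPairs hl hm hp
    exact X_add_X_dvd_of_dact_swap (hf _ _ (prod_flipSigns_pair hne (by simp))
        (dact_speB_swap hl hm h hp (prod_flipSigns_pair hne
          (h.mem_entrySet_iff_of_mem_columnPairs hl hm hp))))

theorem mem_span_speB_of_negatedLike (hl : l.Pairwise (· ≥ ·)) (hm : m.Pairwise (· ≥ ·))
    (h : IsBitableau n l m tT tS) (hf : NegatedLike K n (speB K n l m tT tS) f) :
    f ∈ Ideal.span {speB K n l m tT tS, speB K n m l tS tT} := by
  obtain ⟨g, rfl⟩ := speSsq_mul_speSsq_dvd hl hm h hf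
  have hV : speSsq K n l tT * speSsq K n m tS ≠ 0 :=
    mul_ne_zero (speSsq_ne_zero hl h.injOn_left) (speSsq_ne_zero hm h.injOn_right)
  have hg : ∀ u ∈ entrySet m tS, ∀ k ∉ entrySet m tS,
      dact K n (flipSigns {u, k}) 1 g = -g := by
    intro u hu k hk
    have hfk := hf _ 1 (prod_flipSigns_pair (ne_of_mem_of_not_mem hu hk) (by simp))
      (dact_speB_flipSigns hm h hu hk)
    rw [map_mul, map_mul, dact_speSsq, dact_speSsq] at hfk
    exact mul_left_cancel₀ hV (by simpa using hfk)
  obtain ⟨a, b, rfl⟩ := Ideal.mem_span_pair.1 (mem_span_prod_X_of_dact_flipSigns _ hg)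
  rw [Ideal.mem_span_pair, speB_eq hm h, speB_swap_eq hl hm h]
  exact ⟨a, b, by ring⟩

end SpechtGenerator

theorem Submodule.apply_mem_of_forall_mem_span {R M N : Type*} [Semiring R] [AddCommMonoid M]
    [Module R M] [AddCommMonoid N] [Module R N] {s : Set M} (φ : span R s →ₗ[R] N)
    {p : Submodule R N} (h : ∀ v (hv : v ∈ s), φ ⟨v, subset_span hv⟩ ∈ p)
    (x : span R s) : φ x ∈ p := by
  have hle : span R (Subtype.val ⁻¹' s) ≤ p.comap φ := span_le.2 fun y hy => h y hy
  rw [span_span_coe_preimage] at hle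
  exact hle mem_top

theorem span_speB_le_idealD {K : Type*} [CommRing K] {n : ℕ} {l m : List ℕ}
    {tT tS : ℕ × ℕ → Fin n} (h : IsBitableau n l m tT tS) :
    Ideal.span {speB K n l m tT tS, speB K n m l tS tT} ≤ IdealD K n (.pair {l, m}) := by
  rw [Ideal.span_le, Set.insert_subset_iff, Set.singleton_subset_iff]
  exact ⟨Ideal.subset_span ⟨l, m, tT, tS, rfl, h, rfl⟩,
    Ideal.subset_span ⟨m, l, tS, tT, Multiset.pair_comm l m, h.symm, rfl⟩⟩

theorem stmt9_general (K : Type*) [Field K] [CharZero K] (n : ℕ) (l m : List ℕ)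
    (hl : IsPtn l) (hm : IsPtn m)
    (S : Submodule K (MvPolynomial (Fin n) K))
    (hS : S = Submodule.span K
      ({f | ∃ tT tS, IsBitableau n l m tT tS ∧ f = speB K n l m tT tS} ∪
       {f | ∃ tT tS, IsBitableau n m l tT tS ∧ f = speB K n m l tT tS}))
    (M : Submodule K (MvPolynomial (Fin n) K))
    (e : S ≃ₗ[K] M)
    (he : ∀ (ε : Fin n → ℤˣ) (σ : Equiv.Perm (Fin n)), (∏ i, ε i) = 1 →
      ∀ v w : S, (w : MvPolynomial (Fin n) K) = dact K n ε σ (v : MvPolynomial (Fin n) K) →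
        (e w : MvPolynomial (Fin n) K) = dact K n ε σ ((e v : MvPolynomial (Fin n) K))) :
    (M : Set (MvPolynomial (Fin n) K)) ⊆ (IdealD K n (Dipart.pair {l, m}) : Set _) := by
  subst hS
  have hneg : ∀ v (hv : v ∈ _), NegatedLike K n v (e ⟨v, Submodule.subset_span hv⟩) := by
    intro v hv ε σ hε hσv
    have hw := he ε σ hε ⟨v, Submodule.subset_span hv⟩ (-⟨v, Submodule.subset_span hv⟩)
      (by simp [hσv])
    simpa using hw.symm
  intro f hf
  obtain ⟨x, hx⟩ := e.surjective ⟨f, hf⟩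
  have hmem := Submodule.apply_mem_of_forall_mem_span (M.subtype ∘ₗ e.toLinearMap)
    (p := (IdealD K n (.pair {l, m})).restrictScalars K) (fun v hv => ?_) x
  · simpa [hx] using hmem
  rcases id hv with ⟨tT, tS, hbt, rfl⟩ | ⟨tT, tS, hbt, rfl⟩
  · exact span_speB_le_idealD hbt (mem_span_speB_of_negatedLike hl.1 hm.1 hbt (hneg _ hv))
  · rw [Multiset.pair_comm]
    exact span_speB_le_idealD hbt (mem_span_speB_of_negatedLike hm.1 hl.1 hbt (hneg _ hv))

/-- For distinct partitions `l ≠ m` with `|l| + |m| = n`, every `Dₙ`-submodule of `K[X]` that is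
`Dₙ`-equivariantly isomorphic to the Specht module `𝕊^{{l,m}}` (the span of all `B`-Specht
polynomials of shapes `(l,m)` and `(m,l)`) is contained in the `D`-Specht ideal
`I_{{l,m}}^D`; i.e. the isotypic component of `𝕊^{{l,m}}` is contained in `I_{{l,m}}^D`. -/
theorem stmt9 (K : Type*) [Field K] [CharZero K] (n : ℕ) (l m : List ℕ)
    (hl : IsPtn l) (hm : IsPtn m) (hne : l ≠ m) (hsum : l.sum + m.sum = n)
    (S : Submodule K (MvPolynomial (Fin n) K))
    (hS : S = Submodule.span K
      ({f | ∃ tT tS, IsBitableau n l m tT tS ∧ f = speB K n l m tT tS} ∪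
       {f | ∃ tT tS, IsBitableau n m l tT tS ∧ f = speB K n m l tT tS}))
    (M : Submodule K (MvPolynomial (Fin n) K))
    (hMinv : ∀ (ε : Fin n → ℤˣ) (σ : Equiv.Perm (Fin n)), (∏ i, ε i) = 1 →
      ∀ v ∈ M, dact K n ε σ v ∈ M)
    (e : S ≃ₗ[K] M)
    (he : ∀ (ε : Fin n → ℤˣ) (σ : Equiv.Perm (Fin n)), (∏ i, ε i) = 1 →
      ∀ v w : S, (w : MvPolynomial (Fin n) K) = dact K n ε σ (v : MvPolynomial (Fin n) K) →
        (e w : MvPolynomial (Fin n) K) = dact K n ε σ ((e v : MvPolynomial (Fin n) K))) :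
    (M : Set (MvPolynomial (Fin n) K)) ⊆ (IdealD K n (Dipart.pair {l, m}) : Set _) :=
  stmt9_general K n l m hl hm S hS M e he
end

section
/- For every positive integer n, the didominance relation ⊴_D is a partial order (reflexive, antisymmetric and transitive) on the set 𝒟_n of dipartitions of n, and the dipartition {∅, (1,1,…,1)} consisting of the empty partition and the all-ones partition of n is the minimum of (𝒟_n, ⊴_D). -/
open MvPolynomial

/-!
Identify a signed partition `{λ, ±}` with the pair `{λ, λ}`. On unordered pairs, `≼_D` is
transitive because bidominance is. It is antisymmetric on pairs of partitions: mutual `≼_D`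
forces equal prefix sums of `λ + μ` and `θ + ω`, hence equal rows `λ_j + μ_j = θ_j + ω_j`; the
second bidominance inequalities then compare the rows of `λ` and of `μ` with those of `θ` or
`ω`, and in a cancellative ordered monoid these comparisons force `{λ, μ} = {θ, ω}`. Now
`⊴_D` is equality or strict `≼_D` of the associated pairs, so it is a partial order.
The bipartitions `(∅, 1ⁿ)` and `(1ⁿ, ∅)` have prefix sums `min j n`, which every pair of
partitions of total size `n` dominates.
-/

theorem Multiset.pair_eq_pair_iff {α : Type*} {a b c d : α} :
    ({a, b} : Multiset α) = {c, d} ↔ (a = c ∧ b = d) ∨ (a = d ∧ b = c) := by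
  constructor
  · intro h
    simp only [Multiset.insert_eq_cons, Multiset.cons_eq_cons, Multiset.singleton_inj,
      Multiset.singleton_eq_cons_iff] at h
    grind
  · rintro (⟨rfl, rfl⟩ | ⟨rfl, rfl⟩)
    · rfl
    · exact Multiset.pair_comm _ _

theorem pair_eq_pair_of_add_eq {α : Type*} [AddCommMonoid α] [PartialOrder α]
    [IsOrderedCancelAddMonoid α] {a b c d : α} (h : a + b = c + d)
    (ha : a ≤ c ∨ a ≤ d) (hb : b ≤ c ∨ b ≤ d) (hc : c ≤ a ∨ c ≤ b) (hd : d ≤ a ∨ d ≤ b) :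
    ({a, b} : Multiset α) = {c, d} := by
  have h' : a + b = d + c := h.trans (add_comm c d)
  rw [Multiset.pair_eq_pair_iff]
  rcases ha with hac | had <;> rcases hb with hbc | hbd
  · rcases hc with hca | hcb
    · obtain rfl := le_antisymm hac hca
      exact Or.inl ⟨rfl, add_left_cancel h⟩
    · obtain rfl := le_antisymm hbc hcb
      exact Or.inr ⟨add_right_cancel h', rfl⟩
  · exact Or.inl ((add_eq_add_iff_eq_and_eq hac hbd).1 h)
  · exact Or.inr ((add_eq_add_iff_eq_and_eq had hbc).1 h')
  · rcases hd with hda | hdb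
    · obtain rfl := le_antisymm had hda
      exact Or.inr ⟨rfl, add_left_cancel h'⟩
    · obtain rfl := le_antisymm hbd hdb
      exact Or.inl ⟨add_right_cancel h, rfl⟩

namespace List

variable {l m : List ℕ}

theorem getD_pos_iff_lt_length (hl : ∀ x ∈ l, 0 < x) {j : ℕ} :
    0 < l.getD j 0 ↔ j < l.length := by
  constructor
  · intro h
    by_contra hj
    rw [getD_eq_default _ _ (not_lt.1 hj)] at h
    exact lt_irrefl 0 h
  · intro hj
    rw [getD_eq_getElem _ _ hj]
    exact hl _ (getElem_mem hj)

theorem eq_of_getD_eq (hl : ∀ x ∈ l, 0 < x) (hm : ∀ x ∈ m, 0 < x)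
    (h : ∀ j, l.getD j 0 = m.getD j 0) : l = m := by
  have hlen : l.length = m.length := eq_of_forall_lt_iff fun j => by
    rw [← getD_pos_iff_lt_length hl, ← getD_pos_iff_lt_length hm, h]
  exact ext_getElem hlen fun j h₁ h₂ => by simpa [getD_eq_getElem, h₁, h₂] using h j

theorem sum_take_add_one_eq_add_getD (l : List ℕ) (j : ℕ) :
    (l.take (j + 1)).sum = (l.take j).sum + l.getD j 0 := by
  simp only [take_add_one, sum_append, getD_eq_getElem?_getD]
  cases l[j]? <;> simp

theorem min_le_sum_take (hl : ∀ x ∈ l, 0 < x) (j : ℕ) : min j l.sum ≤ (l.take j).sum := by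
  induction l generalizing j with
  | nil => simp
  | cons a l ih =>
    cases j with
    | zero => simp
    | succ j =>
      have ha := hl a mem_cons_self
      have := ih (fun x hx => hl x (mem_cons_of_mem a hx)) j
      simp only [take_succ_cons, sum_cons]
      omega

theorem min_le_sum_take_add_sum_take (hl : ∀ x ∈ l, 0 < x) (hm : ∀ x ∈ m, 0 < x) (j : ℕ) :
    min j (l.sum + m.sum) ≤ (l.take j).sum + (m.take j).sum := by
  have := min_le_sum_take hl j
  have := min_le_sum_take hm j
  omega

end List

section Bidominance

variable {l m t w a b : List ℕ}

theorem bidom_trans (h₁ : bidom l m t w) (h₂ : bidom t w a b) : bidom l m a b := fun j hj =>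
  ⟨(h₁ j hj).1.trans (h₂ j hj).1, (h₁ j hj).2.trans (h₂ j hj).2⟩

theorem bidom.getD_le (h : bidom l m t w)
    (hs : ∀ j, (l.take j).sum + (m.take j).sum = (t.take j).sum + (w.take j).sum) :
    (l.getD · 0) ≤ (t.getD · 0) := fun j => by
  have := (h (j + 1) j.succ_pos).2
  rw [Nat.add_sub_cancel, hs j] at this
  exact Nat.le_of_add_le_add_right this

theorem predD_refl (l m : List ℕ) : predD l m l m :=
  ⟨Or.inl fun _ _ => ⟨le_rfl, le_rfl⟩, Or.inr fun _ _ => ⟨le_rfl, le_rfl⟩⟩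

theorem predD_comm_left : predD m l t w ↔ predD l m t w := and_comm

theorem predD_comm_right : predD l m w t ↔ predD l m t w := and_congr or_comm or_comm

theorem predD_trans (h₁ : predD l m t w) (h₂ : predD t w a b) : predD l m a b := by
  have step {x y : List ℕ} : bidom x y t w ∨ bidom x y w t → bidom x y a b ∨ bidom x y b a := by
    rintro (h | h)
    · exact h₂.1.imp (bidom_trans h) (bidom_trans h)
    · exact h₂.2.imp (bidom_trans h) (bidom_trans h)
  exact ⟨step h₁.1, step h₁.2⟩

theorem predD.sum_take_le (h : predD l m t w) (j : ℕ) :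
    (l.take j).sum + (m.take j).sum ≤ (t.take j).sum + (w.take j).sum := by
  rcases j.eq_zero_or_pos with rfl | hj
  · simp
  rcases h.1 with h | h
  · exact (h j hj).1
  · have := (h j hj).1
    omega

theorem predD.getD_le (h : predD l m t w)
    (hs : ∀ j, (l.take j).sum + (m.take j).sum = (t.take j).sum + (w.take j).sum) :
    ((l.getD · 0) ≤ (t.getD · 0) ∨ (l.getD · 0) ≤ (w.getD · 0)) ∧
      ((m.getD · 0) ≤ (t.getD · 0) ∨ (m.getD · 0) ≤ (w.getD · 0)) :=
  ⟨h.1.imp (·.getD_le hs) (·.getD_le fun j => by rw [hs, add_comm]),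
    h.2.imp (·.getD_le fun j => by rw [add_comm, hs])
      (·.getD_le fun j => by rw [add_comm, hs, add_comm])⟩

theorem predD_antisymm (hl : ∀ x ∈ l, 0 < x) (hm : ∀ x ∈ m, 0 < x) (ht : ∀ x ∈ t, 0 < x)
    (hw : ∀ x ∈ w, 0 < x) (h₁ : predD l m t w) (h₂ : predD t w l m) :
    ({l, m} : Multiset (List ℕ)) = {t, w} := by
  have hs j : (l.take j).sum + (m.take j).sum = (t.take j).sum + (w.take j).sum :=
    le_antisymm (h₁.sum_take_le j) (h₂.sum_take_le j)
  have hrows : (l.getD · 0) + (m.getD · 0) = (t.getD · 0) + (w.getD · 0) := funext fun j => by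
    have := hs (j + 1)
    simp only [List.sum_take_add_one_eq_add_getD] at this
    simp only [Pi.add_apply]
    have := hs j
    omega
  obtain ⟨hlt, hmt⟩ := h₁.getD_le hs
  obtain ⟨htl, hwl⟩ := h₂.getD_le fun j => (hs j).symm
  rcases Multiset.pair_eq_pair_iff.1 (pair_eq_pair_of_add_eq hrows hlt hmt htl hwl) with
    ⟨e₁, e₂⟩ | ⟨e₁, e₂⟩
  · rw [List.eq_of_getD_eq hl ht (congrFun e₁), List.eq_of_getD_eq hm hw (congrFun e₂)]
  · rw [List.eq_of_getD_eq hl hw (congrFun e₁), List.eq_of_getD_eq hm ht (congrFun e₂),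
      Multiset.pair_comm]

variable {n : ℕ}

theorem bidom_nil_replicate (ht : ∀ x ∈ t, 0 < x) (hw : ∀ x ∈ w, 0 < x)
    (hsum : t.sum + w.sum = n) : bidom [] (List.replicate n 1) t w := fun j _ => by
  have := List.min_le_sum_take_add_sum_take ht hw j
  have := List.min_le_sum_take_add_sum_take ht hw (j - 1)
  simp only [List.take_nil, List.sum_nil, List.getD_nil, List.take_replicate,
    List.sum_replicate, smul_eq_mul, mul_one]
  omega

theorem bidom_replicate_nil (ht : ∀ x ∈ t, 0 < x) (hw : ∀ x ∈ w, 0 < x)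
    (hsum : t.sum + w.sum = n) (hlen : w.length ≤ t.length) :
    bidom (List.replicate n 1) [] t w := by
  intro j hj
  obtain ⟨k, rfl⟩ : ∃ k, j = k + 1 := ⟨j - 1, by omega⟩
  refine ⟨?_, ?_⟩
  · have := List.min_le_sum_take_add_sum_take ht hw (k + 1)
    simp only [List.take_nil, List.sum_nil, List.take_replicate, List.sum_replicate,
      smul_eq_mul, mul_one]
    omega
  have hrep : (List.replicate n 1).getD k 0 = if k < n then 1 else 0 := by
    split_ifs with hk
    · exact List.getD_replicate 1 hk
    · exact List.getD_eq_default _ _ (by simpa using hk)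
  simp only [Nat.add_sub_cancel, hrep, List.take_nil, List.sum_nil, List.take_replicate,
    List.sum_replicate, smul_eq_mul, mul_one]
  rcases lt_or_ge k t.length with hk | hk
  · have hmin := List.min_le_sum_take ht (k + 1)
    have := List.length_le_sum_of_one_le t ht
    rw [List.sum_take_add_one_eq_add_getD] at hmin
    split_ifs <;> omega
  · rw [List.take_of_length_le hk, List.take_of_length_le (hlen.trans hk),
      List.getD_eq_default _ _ hk]
    split_ifs <;> omega

theorem predD_nil_replicate (ht : ∀ x ∈ t, 0 < x) (hw : ∀ x ∈ w, 0 < x)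
    (hsum : t.sum + w.sum = n) : predD [] (List.replicate n 1) t w := by
  refine ⟨Or.inl (bidom_nil_replicate ht hw hsum), ?_⟩
  rcases le_total w.length t.length with h | h
  · exact Or.inl (bidom_replicate_nil ht hw hsum h)
  · exact Or.inr (bidom_replicate_nil hw ht (by omega) h)

end Bidominance

/-- `≼_D` on unordered pairs of partitions. -/
def pairDom (s s' : Multiset (List ℕ)) : Prop :=
  ∃ l m t w, s = {l, m} ∧ s' = {t, w} ∧ predD l m t w

section PairDom

variable {s s' s'' : Multiset (List ℕ)} {l m t w : List ℕ}

theorem pairDom_iff (hs : s = {l, m}) (hs' : s' = {t, w}) : pairDom s s' ↔ predD l m t w := by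
  refine ⟨?_, fun h => ⟨l, m, t, w, hs, hs', h⟩⟩
  rintro ⟨l', m', t', w', rfl, rfl, h⟩
  rcases Multiset.pair_eq_pair_iff.1 hs with ⟨rfl, rfl⟩ | ⟨rfl, rfl⟩ <;>
    rcases Multiset.pair_eq_pair_iff.1 hs' with ⟨rfl, rfl⟩ | ⟨rfl, rfl⟩
  · exact h
  · exact predD_comm_right.2 h
  · exact predD_comm_left.2 h
  · exact predD_comm_left.2 (predD_comm_right.2 h)

theorem pairDom_refl (hs : s = {l, m}) : pairDom s s := (pairDom_iff hs hs).2 (predD_refl l m)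

theorem pairDom_trans (h₁ : pairDom s s') (h₂ : pairDom s' s'') : pairDom s s'' := by
  obtain ⟨l, m, t, w, hs, hs', h₁⟩ := h₁
  obtain ⟨-, -, a, b, -, hs'', -⟩ := id h₂
  exact ⟨l, m, a, b, hs, hs'', predD_trans h₁ ((pairDom_iff hs' hs'').1 h₂)⟩

end PairDom

namespace Dipart

def toPair : Dipart → Multiset (List ℕ)
  | pair s => s
  | signed l _ => {l, l}

variable {n : ℕ} {d e f : Dipart}

theorem Valid.exists_toPair_eq (hd : d.Valid n) :
    ∃ l m, d.toPair = {l, m} ∧ (∀ x ∈ l, 0 < x) ∧ (∀ x ∈ m, 0 < x) ∧ l.sum + m.sum = n := by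
  cases d with
  | pair s =>
    obtain ⟨l, m, hs, -, hl, hm, hsum⟩ := hd
    exact ⟨l, m, hs, hl.2, hm.2, hsum⟩
  | signed l _ => exact ⟨l, l, rfl, hd.1.2, hd.1.2, by rw [← two_mul, hd.2]⟩

theorem Valid.pair_ne {s : Multiset (List ℕ)} (hd : (pair s).Valid n) (l : List ℕ) :
    s ≠ {l, l} := by
  obtain ⟨a, b, rfl, hab, -⟩ := hd
  intro h
  rcases Multiset.pair_eq_pair_iff.1 h with ⟨rfl, rfl⟩ | ⟨rfl, rfl⟩ <;> exact hab rfl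

theorem Valid.toPair_eq_of_pairDom (hd : d.Valid n) (he : e.Valid n)
    (h₁ : pairDom d.toPair e.toPair) (h₂ : pairDom e.toPair d.toPair) : d.toPair = e.toPair := by
  obtain ⟨l, m, hs, hl, hm, -⟩ := hd.exists_toPair_eq
  obtain ⟨t, w, hs', ht, hw, -⟩ := he.exists_toPair_eq
  rw [hs, hs']
  exact predD_antisymm hl hm ht hw ((pairDom_iff hs hs').1 h₁) ((pairDom_iff hs' hs).1 h₂)

theorem didom_pair_left (s : Multiset (List ℕ)) (e : Dipart) :
    didom (pair s) e ↔ pairDom s e.toPair := by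
  cases e with
  | pair s' => rfl
  | signed l _ =>
    refine ⟨fun ⟨a, b, hs, h⟩ => ⟨a, b, l, l, hs, rfl, h⟩, fun h => ?_⟩
    obtain ⟨a, b, -, -, hs, -, -⟩ := id h
    exact ⟨a, b, hs, (pairDom_iff hs rfl).1 h⟩

theorem didom_pair_right (d : Dipart) (s : Multiset (List ℕ)) :
    didom d (pair s) ↔ pairDom d.toPair s := by
  cases d with
  | pair s' => rfl
  | signed l _ =>
    refine ⟨fun ⟨a, b, hs, h⟩ => ⟨l, l, a, b, rfl, hs, h⟩, fun h => ?_⟩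
    obtain ⟨-, -, a, b, -, hs, -⟩ := id h
    exact ⟨a, b, hs, (pairDom_iff rfl hs).1 h⟩

theorem didom_iff (hd : d.Valid n) (he : e.Valid n) :
    didom d e ↔ d = e ∨ (d.toPair ≠ e.toPair ∧ pairDom d.toPair e.toPair) := by
  cases d with
  | pair s =>
    rw [didom_pair_left]
    cases e with
    | pair s' =>
      obtain ⟨l, m, hs, -⟩ := hd.exists_toPair_eq
      by_cases h : s = s'
      · subst h
        exact iff_of_true (pairDom_refl hs) (Or.inl rfl)
      · simp [toPair, h]
    | signed l _ =>
      simp only [toPair, reduceCtorEq, false_or]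
      exact ⟨fun h => ⟨hd.pair_ne l, h⟩, And.right⟩
  | signed l b =>
    cases e with
    | pair s' =>
      simp only [didom_pair_right, toPair, reduceCtorEq, false_or]
      exact ⟨fun h => ⟨(he.pair_ne l).symm, h⟩, And.right⟩
    | signed m b' =>
      simp only [didom, toPair, pairDom_iff rfl rfl, ne_eq,
        Multiset.pair_eq_pair_iff, signed.injEq]
      tauto

theorem didom_refl (hd : d.Valid n) : didom d d := (didom_iff hd hd).2 (Or.inl rfl)

theorem didom_antisymm (hd : d.Valid n) (he : e.Valid n) (h₁ : didom d e) (h₂ : didom e d) :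
    d = e := by
  rcases (didom_iff hd he).1 h₁ with rfl | ⟨hne, h₁⟩
  · rfl
  rcases (didom_iff he hd).1 h₂ with rfl | ⟨-, h₂⟩
  · rfl
  exact absurd (hd.toPair_eq_of_pairDom he h₁ h₂) hne

theorem didom_trans (hd : d.Valid n) (he : e.Valid n) (hf : f.Valid n) (h₁ : didom d e)
    (h₂ : didom e f) : didom d f := by
  rcases (didom_iff hd he).1 h₁ with rfl | ⟨hne, hde⟩
  · exact h₂
  rcases (didom_iff he hf).1 h₂ with rfl | ⟨-, hef⟩
  · exact h₁
  refine (didom_iff hd hf).2 (Or.inr ⟨fun hdf => hne ?_, pairDom_trans hde hef⟩)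
  exact hd.toPair_eq_of_pairDom he hde (hdf ▸ hef)

theorem didom_nil_replicate (hd : d.Valid n) :
    didom (pair {[], List.replicate n 1}) d := by
  obtain ⟨t, w, hs, ht, hw, hsum⟩ := hd.exists_toPair_eq
  exact (didom_pair_left _ d).2 ⟨_, _, t, w, rfl, hs, predD_nil_replicate ht hw hsum⟩

end Dipart

theorem stmt10_general (n : ℕ) :
    (∀ d : Dipart, d.Valid n → didom d d) ∧
    (∀ d e : Dipart, d.Valid n → e.Valid n → didom d e → didom e d → d = e) ∧
    (∀ d e f : Dipart, d.Valid n → e.Valid n → f.Valid n →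
      didom d e → didom e f → didom d f) ∧
    (∀ d : Dipart, d.Valid n →
      didom (Dipart.pair {([] : List ℕ), List.replicate n 1}) d) :=
  ⟨fun _ => Dipart.didom_refl, fun _ _ => Dipart.didom_antisymm,
    fun _ _ _ => Dipart.didom_trans, fun _ => Dipart.didom_nil_replicate⟩

/-- The didominance relation is a partial order on the set of dipartitions of `n`, with
minimum `{∅, (1,…,1)}`. -/
theorem stmt10 (n : ℕ) (hn : 0 < n) :
    (∀ d : Dipart, d.Valid n → didom d d) ∧
    (∀ d e : Dipart, d.Valid n → e.Valid n → didom d e → didom e d → d = e) ∧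
    (∀ d e f : Dipart, d.Valid n → e.Valid n → f.Valid n →
      didom d e → didom e f → didom d f) ∧
    (∀ d : Dipart, d.Valid n →
      didom (Dipart.pair {([] : List ℕ), List.replicate n 1}) d) :=
  stmt10_general n
end

section
/- Let λ and μ be partitions with |λ| + |μ| = n, and suppose x ∈ V_{(λ,μ)}^B ∖ V_{(μ,λ)}^B. Then at least one coordinate of x is zero. -/
open MvPolynomial

/-! Off the coordinate hyperplanes the factor `∏_{j ∈ S} X_j` of a `B`-Specht polynomial is a unit,
so there `spe_{(T,S)}^B` vanishes iff `spe_T^S(X²) · spe_S^S(X²)` does. This product is symmetric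
under swapping `T` and `S`, hence a point of `(K^×)ⁿ` lies in `V_{(λ,μ)}^B` iff it lies in
`V_{(μ,λ)}^B`. -/

theorem IsBitableau.swap {n : ℕ} {l m : List ℕ} {tT tS : ℕ × ℕ → Fin n}
    (h : IsBitableau n l m tT tS) : IsBitableau n m l tS tT :=
  let ⟨hT, hS, hdisj, hcover⟩ := h
  ⟨hS, hT, fun p q hp hq => (hdisj q p hq hp).symm, fun k => (hcover k).symm⟩

section EvalSpecht

variable {K : Type*} [CommRing K] {n : ℕ} {x : Fin n → K}

theorem mem_varB_iff {l m : List ℕ} :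
    x ∈ varB K n l m ↔
      ∀ tT tS, IsBitableau n l m tT tS → eval x (speB K n l m tT tS) = 0 := by
  have : x ∈ varB K n l m ↔ IdealB K n l m ≤ RingHom.ker (eval x) :=
    ⟨fun hx f hf => hx f hf, fun hx f hf => hx hf⟩
  rw [this, IdealB, Ideal.span_le]
  exact ⟨fun h tT tS hb => h ⟨tT, tS, hb, rfl⟩, fun h _ ⟨tT, tS, hb, hf⟩ => hf ▸ h tT tS hb⟩

variable [IsDomain K]

theorem eval_prodVars_ne_zero (hx : ∀ i, x i ≠ 0) (l : List ℕ) (t : ℕ × ℕ → Fin n) :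
    eval x (prodVars K n l t) ≠ 0 := by
  simp only [prodVars, map_prod, eval_X]
  exact Finset.prod_ne_zero_iff.mpr fun _ _ => Finset.prod_ne_zero_iff.mpr fun _ _ => hx _

theorem eval_speB_eq_zero_iff (hx : ∀ i, x i ≠ 0) (l m : List ℕ) (tT tS : ℕ × ℕ → Fin n) :
    eval x (speB K n l m tT tS) = 0 ↔
      eval x (speSsq K n l tT) * eval x (speSsq K n m tS) = 0 := by
  rw [speB, map_mul, map_mul, mul_eq_zero, or_iff_left (eval_prodVars_ne_zero hx m tS)]

theorem varB_swap_of_ne_zero (hx : ∀ i, x i ≠ 0) {l m : List ℕ} (h : x ∈ varB K n l m) :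
    x ∈ varB K n m l := by
  rw [mem_varB_iff] at h ⊢
  intro tT tS hb
  rw [eval_speB_eq_zero_iff hx, mul_comm, ← eval_speB_eq_zero_iff hx]
  exact h tS tT hb.swap

end EvalSpecht

theorem stmt16_general (K : Type*) [Field K] (n : ℕ) (l m : List ℕ)
    (x : Fin n → K) (hx : x ∈ varB K n l m) (hx' : x ∉ varB K n m l) :
    ∃ i : Fin n, x i = 0 := by
  by_contra! hne
  exact hx' (varB_swap_of_ne_zero hne hx)

/-- If `x ∈ V_{(l,m)}^B ∖ V_{(m,l)}^B` then some coordinate of `x` is zero. -/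
theorem stmt16 (K : Type*) [Field K] [CharZero K] (n : ℕ) (l m : List ℕ)
    (hl : IsPtn l) (hm : IsPtn m) (hsum : l.sum + m.sum = n)
    (x : Fin n → K) (hx : x ∈ varB K n l m) (hx' : x ∉ varB K n m l) :
    ∃ i : Fin n, x i = 0 :=
  stmt16_general K n l m x hx hx'
end
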